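/- arXiv:2411.16756 — 9 statements merged into one kernel-verified Lean document; each statement's English description precedes it below -/
import Mathlib

section
/- The relation on words over {1,2} defined by 'x precedes y iff after deleting the longest common suffix of x and y, the number of 2's remaining in y is at least the number of digits remaining in x' is a partial order. -/
/-- Length of the longest common prefix of two lists. -/
def cpl : List Bool → List Bool → ℕ
  | a :: as, b :: bs => if a = b then cpl as bs + 1 else 0
  | _, _ => 0

/-- `x ≼ y` iff after deleting the longest common suffix of `x` and `y`, the number
of 2's (`true`s) remaining in `y` is at least the number of digits remaining in `x`. -/
def prec (x y : List Bool) : Prop :=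
  x.length - cpl x.reverse y.reverse ≤ ((y.reverse).drop (cpl x.reverse y.reverse)).count true

lemma cpl_self (l : List Bool) : cpl l l = l.length := by
  induction l with
  | nil => rfl
  | cons a as ih => simp [cpl, ih]

lemma cpl_comm (x y : List Bool) : cpl x y = cpl y x := by
  induction x generalizing y with
  | nil => cases y <;> rfl
  | cons a as ih =>
    cases y with
    | nil => rfl
    | cons b bs =>
      by_cases h : a = b
      · subst h; simp [cpl, ih]
      · simp [cpl, h, Ne.symm h]

lemma cpl_le_left (x y : List Bool) : cpl x y ≤ x.length := by
  induction x generalizing y with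
  | nil => cases y <;> simp [cpl]
  | cons a as ih =>
    cases y with
    | nil => simp [cpl]
    | cons b bs =>
      by_cases h : a = b
      · simpa [cpl, h] using ih bs
      · simp [cpl, h]

lemma cpl_le_right (x y : List Bool) : cpl x y ≤ y.length := by
  rw [cpl_comm]; exact cpl_le_left y x

lemma take_cpl (x y : List Bool) : x.take (cpl x y) = y.take (cpl x y) := by
  induction x generalizing y with
  | nil => cases y <;> simp [cpl]
  | cons a as ih =>
    cases y with
    | nil => simp [cpl]
    | cons b bs =>
      by_cases h : a = b
      · subst h; simp [cpl, ih]
      · simp [cpl, h]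

lemma cpl_min (x y z : List Bool) : min (cpl x y) (cpl y z) ≤ cpl x z := by
  induction x generalizing y z with
  | nil => cases y <;> simp [cpl]
  | cons a as ih =>
    cases y with
    | nil => simp [cpl]
    | cons b bs =>
      cases z with
      | nil => simp [cpl]
      | cons c cs =>
        by_cases hab : a = b
        · by_cases hbc : b = c
          · subst hab; subst hbc
            simp only [cpl, if_pos rfl, if_true]
            have := ih bs cs
            omega
          · simp [cpl, hbc]
        · simp [cpl, hab]

lemma cpl_drop_ne : ∀ (x y : List Bool) {a b : Bool} {as bs : List Bool},
    x.drop (cpl x y) = a :: as → y.drop (cpl x y) = b :: bs → a ≠ b := by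
  intro x
  induction x with
  | nil => intro y a b as bs hx hy; simp at hx
  | cons c cs ih =>
    intro y a b as bs hx hy
    cases y with
    | nil => simp at hy
    | cons d ds =>
      by_cases h : c = d
      · subst h
        simp only [cpl, if_pos rfl, List.drop_succ_cons] at hx hy
        exact ih ds hx hy
      · simp only [cpl, if_neg h, List.drop_zero] at hx hy
        obtain ⟨rfl, _⟩ : c = a ∧ cs = as := by simpa using hx
        obtain ⟨rfl, _⟩ : d = b ∧ ds = bs := by simpa using hy
        exact h

lemma count_drop_le (l : List Bool) (c : ℕ) :
    (l.drop c).count true ≤ l.length - c := by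
  calc (l.drop c).count true ≤ (l.drop c).length := List.count_le_length ..
    _ = l.length - c := List.length_drop ..

lemma count_drop_drop (l : List Bool) {a b : ℕ} (h : a ≤ b) :
    (l.drop a).count true ≤ (l.drop b).count true + (b - a) := by
  have hsplit : l.drop a = (l.drop a).take (b - a) ++ (l.drop a).drop (b - a) :=
    (List.take_append_drop _ _).symm
  have hdd : (l.drop a).drop (b - a) = l.drop b := by
    rw [List.drop_drop]; congr 1; omega
  calc (l.drop a).count true
      = ((l.drop a).take (b - a)).count true + ((l.drop a).drop (b - a)).count true := by
        conv_lhs => rw [hsplit]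
        exact List.count_append ..
    _ ≤ (b - a) + (l.drop b).count true := by
        rw [hdd]
        have : ((l.drop a).take (b - a)).count true ≤ (b - a) := by
          calc ((l.drop a).take (b - a)).count true ≤ ((l.drop a).take (b - a)).length :=
                List.count_le_length ..
            _ ≤ b - a := List.length_take_le ..
        omega
    _ = (l.drop b).count true + (b - a) := by omega

lemma count_drop_split (l : List Bool) {c1 c2 : ℕ} (h12 : c1 ≤ c2) (h2 : c2 ≤ l.length) :
    (l.drop c1).count true = ((l.take c2).drop c1).count true + (l.drop c2).count true := by
  have hlen : c1 ≤ (l.take c2).length := by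
    rw [List.length_take]; omega
  conv_lhs => rw [← List.take_append_drop c2 l]
  rw [List.drop_append_of_le_length hlen, List.count_append]

/-- The relation `prec` is a partial order: reflexive, antisymmetric and transitive. -/
theorem stmt1 :
    Reflexive prec ∧ (∀ x y, prec x y → prec y x → x = y) ∧ Transitive prec := by
  refine ⟨?_, ?_, ?_⟩
  · intro x
    unfold prec
    rw [cpl_self, List.length_reverse]
    simp
  · intro x y h1 h2
    unfold prec at h1 h2
    set X := x.reverse with hX
    set Y := y.reverse with hY
    rw [cpl_comm Y X] at h2
    set c := cpl X Y with hc
    have hcx : c ≤ X.length := cpl_le_left ..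
    have hcy : c ≤ Y.length := cpl_le_right ..
    have hxl : x.length = X.length := (List.length_reverse (as := x)).symm
    have hyl : y.length = Y.length := (List.length_reverse (as := y)).symm
    rw [hxl] at h1
    rw [hyl] at h2
    -- all quantities are equal
    have hYd : (Y.drop c).count true ≤ Y.length - c := count_drop_le ..
    have hXd : (X.drop c).count true ≤ X.length - c := count_drop_le ..
    have hlen : X.length - c = Y.length - c := by omega
    have hlenXY : X.length = Y.length := by omega
    have hdropX : (X.drop c).length = X.length - c := List.length_drop ..
    have hdropY : (Y.drop c).length = Y.length - c := List.length_drop ..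
    -- show the drops are empty
    have hdeq : X.drop c = [] ∧ Y.drop c = [] := by
      by_contra hne
      have hXne : X.drop c ≠ [] := by
        intro h
        apply hne
        constructor
        · exact h
        · have : X.length - c = 0 := by rw [← hdropX, h]; rfl
          have : (Y.drop c).length = 0 := by omega
          exact List.length_eq_zero_iff.mp this
      obtain ⟨a, as, ha⟩ := List.exists_cons_of_ne_nil hXne
      have hYne : Y.drop c ≠ [] := by
        intro h
        have : Y.length - c = 0 := by rw [← hdropY, h]; rfl
        have : (X.drop c).length = 0 := by omega
        exact hXne (List.length_eq_zero_iff.mp this)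
      obtain ⟨b, bs, hb⟩ := List.exists_cons_of_ne_nil hYne
      have hne' : a ≠ b := cpl_drop_ne X Y ha hb
      -- both heads must be true
      have hXall : (X.drop c).count true = (X.drop c).length := by omega
      have hYall : (Y.drop c).count true = (Y.drop c).length := by omega
      have ha' : a = true := by
        by_contra ha'
        have : a = false := by simpa using ha'
        subst this
        rw [ha] at hXall
        simp [List.count_cons] at hXall
        have : as.count true ≤ as.length := List.count_le_length ..
        omega
      have hb' : b = true := by
        by_contra hb'
        have : b = false := by simpa using hb'
        subst this
        rw [hb] at hYall
        simp [List.count_cons] at hYall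
        have : bs.count true ≤ bs.length := List.count_le_length ..
        omega
      exact hne' (ha'.trans hb'.symm)
    have hXY : X = Y := by
      have h1' : X = X.take c := by
        rw [List.take_of_length_le]
        have : X.length - c = 0 := by rw [← hdropX, hdeq.1]; rfl
        omega
      have h2' : Y = Y.take c := by
        rw [List.take_of_length_le]
        have : Y.length - c = 0 := by rw [← hdropY, hdeq.2]; rfl
        omega
      rw [h1', h2', take_cpl]
    exact List.reverse_injective hXY
  · intro x y z h1 h2
    unfold prec at h1 h2 ⊢
    set X := x.reverse with hX
    set Y := y.reverse with hY
    set Z := z.reverse with hZ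
    set c1 := cpl X Y with hc1
    set c2 := cpl Y Z with hc2
    set c3 := cpl X Z with hc3
    have hxl : x.length = X.length := (List.length_reverse (as := x)).symm
    have hyl : y.length = Y.length := (List.length_reverse (as := y)).symm
    rw [hxl] at h1 ⊢
    rw [hyl] at h2
    have hmin : min c1 c2 ≤ c3 := cpl_min X Y Z
    have hc1Y : c1 ≤ Y.length := cpl_le_right ..
    have hc2Y : c2 ≤ Y.length := cpl_le_left ..
    have hc2Z : c2 ≤ Z.length := cpl_le_right ..
    rcases le_or_gt c1 c2 with hle | hlt
    · -- c1 ≤ c2, so c3 ≥ c1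
      have hc13 : c1 ≤ c3 := by omega
      have htk : Y.take c2 = Z.take c2 := take_cpl Y Z
      have dY := count_drop_split Y hle hc2Y
      have dZ := count_drop_split Z (le_refl c2 |>.trans (le_refl c2) |> fun _ => hle) hc2Z
      rw [← htk] at dZ
      have hY2 : (Y.drop c2).count true ≤ Y.length - c2 := count_drop_le ..
      have hC1 : (Z.drop c1).count true ≤ (Z.drop c3).count true + (c3 - c1) :=
        count_drop_drop Z hc13
      omega
    · -- c2 < c1, so c3 ≥ c2
      have hc23 : c2 ≤ c3 := by omega
      have hY1 : (Y.drop c1).count true ≤ Y.length - c1 := count_drop_le ..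
      have hC1 : (Z.drop c2).count true ≤ (Z.drop c3).count true + (c3 - c2) :=
        count_drop_drop Z hc23
      omega
end

section
/- For any word v over the alphabet {1,2}, the number of saturated decreasing paths in the Young–Fibonacci graph from v down to the empty word equals the product ∏_{j=1}^{d(v)} g(v,j), where d(v) is the number of 2's in v and g(v,j) = β_0 + β_1 + ... + β_{j-1} + 2j - 1 when v is written as ...2 1^{β_m} 2 ... 2 1^{β_1} 2 1^{β_0} (β_i counts the 1's between consecutive 2's reading from the right). -/
open Filter

/-- Words over {1,2}: `true` encodes the digit 2, `false` encodes the digit 1. -/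
abbrev W := List Bool

/-- Digit sum of a word. -/
def dsum (x : W) : ℕ := (x.map fun c => if c then 2 else 1).sum

/-- Downward edge relation in the Young–Fibonacci graph `YF`:
either delete the leftmost 1, or replace a 2 lying to the left of the leftmost 1 by a 1. -/
def down (x y : W) : Prop :=
  (∃ p s, (∀ c ∈ p, c = true) ∧ x = p ++ false :: s ∧ y = p ++ s) ∨
  (∃ p s, (∀ c ∈ p, c = true) ∧ x = p ++ true :: s ∧ y = p ++ false :: s)

/-- `d1 w v` = number of saturated decreasing paths from `v` down to `w` in `YF`. -/
noncomputable def d1 (w v : W) : ℕ :=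
  Nat.card {L : List W // List.Chain down v L ∧ (v :: L).getLast (List.cons_ne_nil _ _) = w}

/-- Symbols of `YF^r`: `none` encodes 2, `some i` encodes the indexed one `1_i`. -/
abbrev SymR (r : ℕ) := Option (Fin r)

/-- Downward edge relation in `YF^r`. -/
def downR {r : ℕ} (x y : List (SymR r)) : Prop :=
  (∃ (p s : List (SymR r)) (i : Fin r), (∀ c ∈ p, c = none) ∧ x = p ++ some i :: s ∧ y = p ++ s) ∨
  (∃ (p s : List (SymR r)) (i : Fin r), (∀ c ∈ p, c = none) ∧ x = p ++ none :: s ∧ y = p ++ some i :: s)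

/-- Number of saturated decreasing paths from `v` down to `w` in `YF^r`. -/
noncomputable def dR {r : ℕ} (w v : List (SymR r)) : ℕ :=
  Nat.card {L : List (List (SymR r)) //
    List.Chain downR v L ∧ (v :: L).getLast (List.cons_ne_nil _ _) = w}

/-- The index-forgetting map `s : YF^r → YF`. -/
def forget {r : ℕ} (x : List (SymR r)) : W := x.map fun c => c.isNone

/-- Index (0-based, from the head) of the `k`-th `true` in a list (`k ≥ 1`); junk if absent. -/
def idxTrue : List Bool → ℕ → ℕ
  | [], _ => 0
  | false :: xs, k => idxTrue xs k + 1
  | true :: xs, k => if k ≤ 1 then 0 else idxTrue xs (k - 1) + 1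

/-- `gv x k = β₀ + ⋯ + β_{k-1} + 2k - 1` where the `βᵢ` are the blocks of 1's of `x`
read from the right; equivalently (number of symbols to the right of the k-th 2) + k. -/
def gv (x : W) (k : ℕ) : ℕ := idxTrue x.reverse k + k

/-- `pik x i = ∏_{j : gv x j > i} (gv x j - i) / gv x j`. -/
noncomputable def pik (x : W) (i : ℕ) : ℝ :=
  ∏ j ∈ Finset.Icc 1 (x.count true),
    if i < gv x j then ((gv x j : ℝ) - i) / gv x j else 1

/-- `π(x) = ∏_{j : gv x j > 1} (gv x j - 1)/gv x j`. -/
noncomputable def piW (x : W) : ℝ := pik x 1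

/-- Number of 2's among the first `t+1` symbols (from the right) of a left-infinite word. -/
def twoCount (v : ℕ → Bool) (t : ℕ) : ℕ := ((Finset.range (t + 1)).filter fun s => v s = true).card

/-- `gInf v k`: for a left-infinite word `v` (position 0 = rightmost symbol),
the position of the `k`-th 2 from the right plus `k`. -/
noncomputable def gInf (v : ℕ → Bool) (k : ℕ) : ℕ := sInf {t | k ≤ twoCount v t} + k

open Classical in
/-- `pikInf v i = ∏_{j : gInf v j > i} (gInf v j - i)/gInf v j` for a left-infinite word. -/
noncomputable def pikInf (v : ℕ → Bool) (i : ℕ) : ℝ :=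
  ∏' j : ℕ,
    if 1 ≤ j ∧ (∃ t, j ≤ twoCount v t) ∧ i < gInf v j then
      ((gInf v j : ℝ) - i) / gInf v j
    else 1

noncomputable def piInf (v : ℕ → Bool) : ℝ := pikInf v 1


namespace YFaux

noncomputable def F (v : W) : ℕ := ∏ j ∈ Finset.Icc 1 (v.count true), gv v j

lemma F_nil : F [] = 1 := by simp [F]

lemma dsum_append (a b : W) : dsum (a ++ b) = dsum a + dsum b := by
  simp [dsum]

lemma dsum_cons (c : Bool) (t : W) : dsum (c :: t) = (if c then 2 else 1) + dsum t := by
  simp [dsum]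

lemma dsum_eq (v : W) : dsum v = v.length + v.count true := by
  induction v with
  | nil => simp [dsum]
  | cons c t ih => cases c <;> simp [dsum_cons, List.count_cons, ih] <;> omega

lemma down_dsum {x y : W} (h : down x y) : dsum x = dsum y + 1 := by
  rcases h with ⟨p, s, _, hx, hy⟩ | ⟨p, s, _, hx, hy⟩ <;>
    subst hx <;> subst hy <;> simp [dsum_append, dsum_cons] <;> omega

lemma down_nil (y : W) : ¬ down [] y := by
  rintro (⟨p, s, _, hx, _⟩ | ⟨p, s, _, hx, _⟩) <;> simp at hx

lemma idxTrue_append (l l' : List Bool) (k : ℕ) (h1 : 1 ≤ k) (h2 : k ≤ l.count true) :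
    idxTrue (l ++ l') k = idxTrue l k := by
  induction l generalizing k with
  | nil => simp at h2; omega
  | cons c xs ih =>
    cases c with
    | false =>
      simp only [List.cons_append, idxTrue, List.append_eq]
      rw [ih k h1 (by simpa [List.count_cons] using h2)]
    | true =>
      simp only [List.cons_append, idxTrue, List.append_eq]
      by_cases hk : k ≤ 1
      · simp [hk]
      · simp only [if_neg hk]
        rw [ih (k-1) (by omega) (by simp [List.count_cons] at h2; omega)]

lemma idxTrue_last (l : List Bool) : idxTrue (l ++ [true]) (l.count true + 1) = l.length := by
  induction l with
  | nil => simp [idxTrue]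
  | cons c xs ih =>
    cases c with
    | false => simpa [idxTrue, List.count_cons] using ih
    | true =>
      have : ¬ (xs.count true + 1 + 1 ≤ 1) := by omega
      simp [idxTrue, List.count_cons, this, ih]

lemma gv_cons_false (t : W) (k : ℕ) (h1 : 1 ≤ k) (h2 : k ≤ t.count true) :
    gv (false :: t) k = gv t k := by
  unfold gv
  rw [List.reverse_cons, idxTrue_append _ _ _ h1 (by simpa using h2)]

lemma gv_cons_true (u : W) (k : ℕ) (h1 : 1 ≤ k) (h2 : k ≤ u.count true) :
    gv (true :: u) k = gv u k := by
  unfold gv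
  rw [List.reverse_cons, idxTrue_append _ _ _ h1 (by simpa using h2)]

lemma gv_cons_true_top (u : W) : gv (true :: u) (u.count true + 1) = dsum u + 1 := by
  unfold gv
  rw [List.reverse_cons]
  have : u.reverse.count true = u.count true := by simp
  rw [← this, idxTrue_last, dsum_eq]
  simp
  omega

lemma F_cons_false (t : W) : F (false :: t) = F t := by
  unfold F
  rw [show (false :: t).count true = t.count true by simp [List.count_cons]]
  exact Finset.prod_congr rfl fun j hj => by
    rw [Finset.mem_Icc] at hj; exact gv_cons_false t j hj.1 hj.2

lemma F_cons_true (u : W) : F (true :: u) = (dsum u + 1) * F u := by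
  unfold F
  rw [show (true :: u).count true = u.count true + 1 by simp [List.count_cons]]
  rw [Finset.prod_Icc_succ_top (by omega), gv_cons_true_top]
  rw [mul_comm]
  congr 1
  exact Finset.prod_congr rfl fun j hj => by
    rw [Finset.mem_Icc] at hj; exact gv_cons_true u j hj.1 hj.2

def nbs : W → List W
  | [] => []
  | false :: t => [t]
  | true :: u => (false :: u) :: (nbs u).map (true :: ·)

lemma down_iff (v y : W) : down v y ↔ y ∈ nbs v := by
  induction v generalizing y with
  | nil =>
    simp only [nbs, List.not_mem_nil, iff_false]
    rintro (⟨p, s, _, hx, _⟩ | ⟨p, s, _, hx, _⟩) <;> simp at hx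
  | cons c u ih =>
    cases c with
    | false =>
      constructor
      · rintro (⟨p, s, hp, hx, hy⟩ | ⟨p, s, hp, hx, hy⟩)
        · cases p with
          | nil =>
            simp at hx
            simp [nbs, hy, hx]
          | cons c' p' =>
            have := hp c' (by simp)
            simp [this] at hx
        · cases p with
          | nil => simp at hx
          | cons c' p' =>
            have := hp c' (by simp)
            simp [this] at hx
      · intro hy
        simp only [nbs, List.mem_singleton] at hy
        exact Or.inl ⟨[], u, by simp, by simp, by simp [hy]⟩
    | true =>
      constructor
      · rintro (⟨p, s, hp, hx, hy⟩ | ⟨p, s, hp, hx, hy⟩)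
        · cases p with
          | nil => simp at hx
          | cons c' p' =>
            have hc' : c' = true := hp c' (by simp)
            subst hc'
            simp only [List.cons_append, List.cons.injEq, true_and] at hx
            have hd : down u (p' ++ s) :=
              Or.inl ⟨p', s, fun c hc => hp c (by simp [hc]), hx, rfl⟩
            simp only [nbs, List.mem_cons, List.mem_map]
            exact Or.inr ⟨p' ++ s, (ih _).mp hd, by simp [hy]⟩
        · cases p with
          | nil =>
            simp at hx
            simp [nbs, hy, hx]
          | cons c' p' =>
            have hc' : c' = true := hp c' (by simp)
            subst hc'
            simp only [List.cons_append, List.cons.injEq, true_and] at hx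
            have hd : down u (p' ++ false :: s) :=
              Or.inr ⟨p', s, fun c hc => hp c (by simp [hc]), hx, rfl⟩
            simp only [nbs, List.mem_cons, List.mem_map]
            exact Or.inr ⟨p' ++ false :: s, (ih _).mp hd, by simp [hy]⟩
      · intro hy
        simp only [nbs, List.mem_cons, List.mem_map] at hy
        rcases hy with rfl | ⟨y', hy', rfl⟩
        · exact Or.inr ⟨[], u, by simp, by simp, by simp⟩
        · rcases (ih y').mpr hy' with ⟨p, s, hp, hx, hy⟩ | ⟨p, s, hp, hx, hy⟩
          · exact Or.inl ⟨true :: p, s, fun c hc => by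
                rcases List.mem_cons.mp hc with h | h
                · exact h
                · exact hp c h,
              by simp [hx], by simp [hy]⟩
          · exact Or.inr ⟨true :: p, s, fun c hc => by
                rcases List.mem_cons.mp hc with h | h
                · exact h
                · exact hp c h,
              by simp [hx], by simp [hy]⟩

lemma nbs_nodup (v : W) : (nbs v).Nodup := by
  induction v with
  | nil => simp [nbs]
  | cons c u ih =>
    cases c with
    | false => simp [nbs]
    | true =>
      simp only [nbs, List.nodup_cons]
      refine ⟨?_, ih.map fun a b h => by simpa using h⟩
      rintro hmem
      rcases List.mem_map.mp hmem with ⟨y', _, h⟩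
      simp at h

lemma sumF : ∀ (v : W), v ≠ [] → ((nbs v).map F).sum = F v := by
  intro v
  induction v with
  | nil => intro h; exact absurd rfl h
  | cons c u ih =>
    intro _
    cases c with
    | false => simp [nbs, F_cons_false]
    | true =>
      have h1 : (((nbs u).map (true :: ·)).map F).sum = dsum u * F u := by
        rw [List.map_map]
        have h2 : (nbs u).map (F ∘ (true :: ·)) = (nbs u).map (fun y => dsum u * F y) := by
          apply List.map_congr_left
          intro y hy
          have hd := down_dsum ((down_iff u y).mpr hy)
          simp only [Function.comp_apply, F_cons_true]
          congr 1
          omega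
        rw [h2, List.sum_map_mul_left]
        rcases eq_or_ne u [] with rfl | hu
        · simp [nbs, dsum]
        · rw [ih hu]
      simp only [nbs, List.map_cons, List.sum_cons, h1, F_cons_false, F_cons_true]
      ring

def Pset (v : W) : Type :=
  {L : List W // List.Chain down v L ∧ (v :: L).getLast (List.cons_ne_nil _ _) = ([] : W)}

instance psetNilUnique : Unique (Pset []) where
  default := ⟨[], List.Chain.nil, rfl⟩
  uniq := fun ⟨L, hc, _⟩ => by
    cases L with
    | nil => rfl
    | cons y L' => exact absurd (List.chain_cons.mp hc).1 (down_nil y)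

noncomputable def psetEquiv (v : W) (hv : v ≠ []) :
    Pset v ≃ Σ y : ((nbs v).toFinset : Finset W), Pset y.val where
  toFun := fun ⟨L, hL⟩ =>
    match L, hL with
    | [], ⟨_, hl⟩ => absurd hl hv
    | y :: L', ⟨hc, hl⟩ =>
      ⟨⟨y, List.mem_toFinset.mpr ((down_iff v y).mp (List.chain_cons.mp hc).1)⟩,
       ⟨L', (List.chain_cons.mp hc).2, by
          rw [List.getLast_cons (List.cons_ne_nil _ _)] at hl; exact hl⟩⟩
  invFun := fun ⟨⟨y, hy⟩, ⟨L', hc', hl'⟩⟩ =>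
    ⟨y :: L', List.chain_cons.mpr ⟨(down_iff v y).mpr (List.mem_toFinset.mp hy), hc'⟩,
     by rw [List.getLast_cons (List.cons_ne_nil _ _)]; exact hl'⟩
  left_inv := fun ⟨L, hL⟩ => by
    match L, hL with
    | [], ⟨_, hl⟩ => exact absurd hl hv
    | y :: L', ⟨hc, hl⟩ => rfl
  right_inv := fun ⟨⟨y, hy⟩, ⟨L', hc', hl'⟩⟩ => rfl

lemma pset_main : ∀ (n : ℕ) (v : W), dsum v = n → Finite (Pset v) ∧ Nat.card (Pset v) = F v := by
  intro n
  induction n using Nat.strong_induction_on with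
  | _ n ih =>
    intro v hn
    by_cases hv : v = []
    · subst hv
      exact ⟨inferInstance, by rw [Nat.card_unique, F_nil]⟩
    · have hlt : ∀ y ∈ nbs v, dsum y < n := fun y hy => by
        have := down_dsum ((down_iff v y).mpr hy); omega
      haveI hfin : ∀ y : ((nbs v).toFinset : Finset W), Finite (Pset y.val) :=
        fun y => (ih (dsum y.val) (hlt y.val (List.mem_toFinset.mp y.2)) y.val rfl).1
      have e := psetEquiv v hv
      haveI hF : Finite (Pset v) := Finite.of_equiv _ e.symm
      refine ⟨hF, ?_⟩
      letI : ∀ y : ((nbs v).toFinset : Finset W), Fintype (Pset y.val) :=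
        fun y => Fintype.ofFinite _
      rw [Nat.card_congr e, Nat.card_eq_fintype_card, Fintype.card_sigma]
      have hcard : ∀ y : ((nbs v).toFinset : Finset W), Fintype.card (Pset y.val) = F y.val :=
        fun y => by
          rw [← Nat.card_eq_fintype_card]
          exact (ih (dsum y.val) (hlt y.val (List.mem_toFinset.mp y.2)) y.val rfl).2
      calc (∑ y : ((nbs v).toFinset : Finset W), Fintype.card (Pset y.val))
          = ∑ y : ((nbs v).toFinset : Finset W), F y.val :=
            Finset.sum_congr rfl fun y _ => hcard y
        _ = ∑ y ∈ (nbs v).toFinset, F y := Finset.sum_coe_sort _ _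
        _ = ((nbs v).map F).sum := List.sum_toFinset F (nbs_nodup v)
        _ = F v := sumF v hv

end YFaux

/-- The number of saturated decreasing paths from `v` down to the empty word in the
Young–Fibonacci graph equals `∏_{j=1}^{d(v)} g(v,j)`. -/
theorem stmt2 (v : W) :
    d1 [] v = ∏ j ∈ Finset.Icc 1 (v.count true), gv v j :=
  (YFaux.pset_main (dsum v) v rfl).2
end

section
/- For every vertex v of the r-differential Young–Fibonacci graph YF^r, the number of saturated decreasing paths from v to the empty word equals r^{d(v)} times the number of saturated decreasing paths from s(v) to the empty word in the ordinary Young–Fibonacci graph YF, where d(v) is the number of 2's in v and s(v) is the word obtained from v by forgetting the indices of all 1's. -/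
open Filter

section abstractCount

variable {α : Type*} (R : α → α → Prop) (w : α)

def Paths (v : α) : Type _ :=
  {L : List α // List.Chain R v L ∧ (v :: L).getLast (List.cons_ne_nil _ _) = w}

variable {R w}

theorem chain_last_measure {μ : α → ℕ} (h3 : ∀ x y, R x y → μ y + 1 = μ x) :
    ∀ (L : List α) (v : α), List.Chain R v L →
      μ ((v :: L).getLast (List.cons_ne_nil _ _)) + L.length = μ v := by
  intro L
  induction L with
  | nil => intro v _; simp
  | cons y L ih =>
    intro v hc
    simp only [List.Chain, List.chain_cons] at hc
    have := ih y hc.2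
    have h := h3 v y hc.1
    simp only [List.getLast_cons (List.cons_ne_nil y L), List.length_cons] at *
    omega

def pathsUnique {μ : α → ℕ} (h3 : ∀ x y, R x y → μ y + 1 = μ x) : Unique (Paths R w w) where
  default := ⟨[], List.Chain.nil, rfl⟩
  uniq := by
    rintro ⟨L, hc, hl⟩
    have := chain_last_measure h3 L w hc
    rw [hl] at this
    have : L = [] := List.length_eq_zero_iff.mp (by omega)
    subst this
    rfl

noncomputable def pathsEquiv (v : α) (hv : v ≠ w) :
    Paths R w v ≃ Σ y : {y // R v y}, Paths R w y.1 := by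
  refine (Equiv.ofBijective (fun z : (Σ y : {y // R v y}, Paths R w y.1) =>
    (⟨z.1.1 :: z.2.1, List.chain_cons.mpr ⟨z.1.2, z.2.2.1⟩, by
      rw [List.getLast_cons (List.cons_ne_nil _ _)]; exact z.2.2.2⟩ : Paths R w v)) ⟨?_, ?_⟩).symm
  · rintro ⟨⟨y, hy⟩, ⟨L, hL⟩⟩ ⟨⟨y', hy'⟩, ⟨L', hL'⟩⟩ h
    simp only [Subtype.mk.injEq, List.cons.injEq] at h
    obtain ⟨h1, h2⟩ := h
    subst h1; subst h2; rfl
  · rintro ⟨L, hc, hl⟩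
    match L with
    | [] => exact absurd hl hv
    | y :: L =>
      simp only [List.Chain, List.chain_cons] at hc
      exact ⟨⟨⟨y, hc.1⟩, ⟨L, hc.2, by rw [List.getLast_cons (List.cons_ne_nil _ _)] at hl; exact hl⟩⟩,
        by simp⟩

theorem paths_card {μ : α → ℕ} (nb : α → List α)
    (h1 : ∀ x y, R x y ↔ y ∈ nb x) (h2 : ∀ x, (nb x).Nodup)
    (h3 : ∀ x y, R x y → μ y + 1 = μ x) :
    ∀ v, Finite (Paths R w v) ∧
      (v ≠ w → Nat.card (Paths R w v) = ((nb v).map fun y => Nat.card (Paths R w y)).sum) := by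
  suffices key : ∀ n v, μ v = n → Finite (Paths R w v) ∧
      (v ≠ w → Nat.card (Paths R w v) = ((nb v).map fun y => Nat.card (Paths R w y)).sum) by
    intro v; exact key (μ v) v rfl
  intro n
  induction n using Nat.strong_induction_on with
  | _ n ih =>
  intro v hn
  classical
  by_cases hv : v = w
  · subst hv
    have : Unique (Paths R v v) := pathsUnique h3
    exact ⟨Finite.of_subsingleton, fun h => absurd rfl h⟩
  · have e := pathsEquiv (R := R) (w := w) v hv
    have hfin : ∀ y : {y // R v y}, Finite (Paths R w y.1) := by
      rintro ⟨y, hy⟩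
      exact ((ih (μ y) (by have := h3 v y hy; omega) y rfl :)).1
    have hsub : Fintype {y // R v y} := by
      refine Fintype.subtype (nb v).toFinset ?_
      intro y; rw [List.mem_toFinset]; exact (h1 v y).symm
    have hfinite : Finite (Paths R w v) := by
      have : ∀ y : {y // R v y}, Finite (Paths R w y.1) := hfin
      exact Finite.of_equiv _ e.symm
    refine ⟨hfinite, fun _ => ?_⟩
    classical
    have : ∀ y : {y // R v y}, Fintype (Paths R w y.1) := fun y => Fintype.ofFinite _
    rw [Nat.card_congr e]
    rw [Nat.card_eq_fintype_card, Fintype.card_sigma]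
    have step1 : ∑ y : {y // R v y}, Fintype.card (Paths R w y.1)
        = ∑ y ∈ (nb v).toFinset, Nat.card (Paths R w y) := by
      rw [← Finset.sum_coe_sort ((nb v).toFinset) (fun y => Nat.card (Paths R w y))]
      refine Fintype.sum_equiv (Equiv.subtypeEquivRight ?_) _ _ ?_
      · intro y; rw [List.mem_toFinset]; exact h1 v y
      · intro y; simp [Nat.card_eq_fintype_card, Equiv.subtypeEquivRight]; exact (Nat.card_eq_fintype_card).symm
    rw [step1, List.sum_toFinset _ (h2 v)]

end abstractCount

-- neighbor lists
def nbr1 : W → List W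
  | [] => []
  | false :: s => [s]
  | true :: s => (false :: s) :: (nbr1 s).map (true :: ·)

def nbrR {r : ℕ} : List (SymR r) → List (List (SymR r))
  | [] => []
  | some _ :: s => [s]
  | none :: s => ((List.finRange r).map fun j => some j :: s) ++ (nbrR s).map (none :: ·)

theorem down_iff (x y : W) : down x y ↔ y ∈ nbr1 x := by
  induction x generalizing y with
  | nil =>
    simp only [nbr1, List.not_mem_nil, iff_false]
    rintro (⟨p, t, hp, hx, hy⟩ | ⟨p, t, hp, hx, hy⟩) <;> simp at hx
  | cons c s ih =>
    cases c with
    | false =>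
      constructor
      · rintro (⟨p, t, hp, hx, hy⟩ | ⟨p, t, hp, hx, hy⟩)
        · cases p with
          | nil =>
            simp only [List.nil_append, List.cons.injEq] at hx hy
            subst hy; simp [nbr1, hx.2]
          | cons c p' =>
            have hc := hp c (by simp)
            subst hc; simp at hx
        · cases p with
          | nil => simp at hx
          | cons c p' =>
            have hc := hp c (by simp)
            subst hc; simp at hx
      · intro hy
        simp only [nbr1, List.mem_singleton] at hy
        subst hy
        exact Or.inl ⟨[], y, by simp, rfl, rfl⟩
    | true =>
      constructor
      · rintro (⟨p, t, hp, hx, hy⟩ | ⟨p, t, hp, hx, hy⟩)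
        · cases p with
          | nil => simp at hx
          | cons c p' =>
            have hc := hp c (by simp); subst hc
            rw [List.cons_append, List.cons.injEq] at hx
            have hd : down s (p' ++ t) :=
              Or.inl ⟨p', t, fun c hc => hp c (by simp [hc]), hx.2, rfl⟩
            rw [ih] at hd
            subst hy
            simp only [nbr1, List.cons_append, List.mem_cons, List.mem_map]
            exact Or.inr ⟨p' ++ t, hd, rfl⟩
        · cases p with
          | nil =>
            simp only [List.nil_append, List.cons.injEq] at hx hy
            subst hy; simp [nbr1, hx.2]
          | cons c p' =>
            have hc := hp c (by simp); subst hc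
            rw [List.cons_append, List.cons.injEq] at hx
            have hd : down s (p' ++ false :: t) :=
              Or.inr ⟨p', t, fun c hc => hp c (by simp [hc]), hx.2, rfl⟩
            rw [ih] at hd
            subst hy
            simp only [nbr1, List.cons_append, List.mem_cons, List.mem_map]
            exact Or.inr ⟨p' ++ false :: t, hd, rfl⟩
      · intro hy
        simp only [nbr1, List.mem_cons, List.mem_map] at hy
        rcases hy with rfl | ⟨z, hz, rfl⟩
        · exact Or.inr ⟨[], s, by simp, rfl, rfl⟩
        · rw [← ih] at hz
          rcases hz with ⟨p, t, hp, hx, hy⟩ | ⟨p, t, hp, hx, hy⟩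
          · exact Or.inl ⟨true :: p, t, by
              intro c hc; rcases List.mem_cons.mp hc with rfl | h; rfl; exact hp c h,
              by rw [List.cons_append, hx], by rw [List.cons_append, hy]⟩
          · exact Or.inr ⟨true :: p, t, by
              intro c hc; rcases List.mem_cons.mp hc with rfl | h; rfl; exact hp c h,
              by rw [List.cons_append, hx], by rw [List.cons_append, hy]⟩

theorem downR_iff {r : ℕ} (x y : List (SymR r)) : downR x y ↔ y ∈ nbrR x := by
  induction x generalizing y with
  | nil =>
    simp only [nbrR, List.not_mem_nil, iff_false]
    rintro (⟨p, t, i, hp, hx, hy⟩ | ⟨p, t, i, hp, hx, hy⟩) <;> simp at hx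
  | cons c s ih =>
    cases c with
    | some i0 =>
      constructor
      · rintro (⟨p, t, i, hp, hx, hy⟩ | ⟨p, t, i, hp, hx, hy⟩)
        · cases p with
          | nil =>
            simp only [List.nil_append, List.cons.injEq] at hx hy
            subst hy; simp [nbrR, hx.2]
          | cons c p' =>
            have hc := hp c (by simp)
            subst hc; simp at hx
        · cases p with
          | nil => simp at hx
          | cons c p' =>
            have hc := hp c (by simp)
            subst hc; simp at hx
      · intro hy
        simp only [nbrR, List.mem_singleton] at hy
        subst hy
        exact Or.inl ⟨[], y, i0, by simp, rfl, rfl⟩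
    | none =>
      constructor
      · rintro (⟨p, t, i, hp, hx, hy⟩ | ⟨p, t, i, hp, hx, hy⟩)
        · cases p with
          | nil => simp at hx
          | cons c p' =>
            have hc := hp c (by simp); subst hc
            rw [List.cons_append, List.cons.injEq] at hx
            have hd : downR s (p' ++ t) :=
              Or.inl ⟨p', t, i, fun c hc => hp c (by simp [hc]), hx.2, rfl⟩
            rw [ih] at hd
            subst hy
            simp only [nbrR, List.cons_append, List.mem_append, List.mem_map]
            exact Or.inr ⟨p' ++ t, hd, rfl⟩
        · cases p with
          | nil =>
            simp only [List.nil_append, List.cons.injEq] at hx hy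
            subst hy
            simp only [nbrR, List.mem_append, List.mem_map, List.mem_finRange]
            exact Or.inl ⟨i, by simp [hx.2]⟩
          | cons c p' =>
            have hc := hp c (by simp); subst hc
            rw [List.cons_append, List.cons.injEq] at hx
            have hd : downR s (p' ++ some i :: t) :=
              Or.inr ⟨p', t, i, fun c hc => hp c (by simp [hc]), hx.2, rfl⟩
            rw [ih] at hd
            subst hy
            simp only [nbrR, List.cons_append, List.mem_append, List.mem_map]
            exact Or.inr ⟨p' ++ some i :: t, hd, rfl⟩
      · intro hy
        simp only [nbrR, List.mem_append, List.mem_map, List.mem_finRange, true_and] at hy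
        rcases hy with ⟨j, rfl⟩ | ⟨z, hz, rfl⟩
        · exact Or.inr ⟨[], s, j, by simp, rfl, rfl⟩
        · rw [← ih] at hz
          rcases hz with ⟨p, t, i, hp, hx, hy⟩ | ⟨p, t, i, hp, hx, hy⟩
          · exact Or.inl ⟨none :: p, t, i, by
              intro c hc; rcases List.mem_cons.mp hc with rfl | h; rfl; exact hp c h,
              by rw [List.cons_append, hx], by rw [List.cons_append, hy]⟩
          · exact Or.inr ⟨none :: p, t, i, by
              intro c hc; rcases List.mem_cons.mp hc with rfl | h; rfl; exact hp c h,
              by rw [List.cons_append, hx], by rw [List.cons_append, hy]⟩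

theorem nbr1_nodup (x : W) : (nbr1 x).Nodup := by
  induction x with
  | nil => simp [nbr1]
  | cons c s ih =>
    cases c with
    | false => simp [nbr1]
    | true =>
      simp only [nbr1, List.nodup_cons, List.mem_map]
      refine ⟨?_, ih.map (fun a b h => by simpa using h)⟩
      rintro ⟨z, _, h⟩
      simp at h

theorem nbrR_nodup {r : ℕ} (x : List (SymR r)) : (nbrR x).Nodup := by
  induction x with
  | nil => simp [nbrR]
  | cons c s ih =>
    cases c with
    | some i => simp [nbrR]
    | none =>
      simp only [nbrR]
      refine List.Nodup.append ?_ (ih.map (fun a b h => by simpa using h)) ?_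
      · exact (List.nodup_finRange r).map (fun a b h => by simpa using h)
      · intro z h1 h2
        simp only [List.mem_map, List.mem_finRange, true_and] at h1 h2
        obtain ⟨j, rfl⟩ := h1
        obtain ⟨z', _, h⟩ := h2
        simp at h

theorem dsum_cons (c : Bool) (s : W) : dsum (c :: s) = (if c then 2 else 1) + dsum s := by
  simp [dsum]

theorem meas1 (x y : W) (h : y ∈ nbr1 x) : dsum y + 1 = dsum x := by
  induction x generalizing y with
  | nil => simp [nbr1] at h
  | cons c s ih =>
    cases c with
    | false =>
      simp only [nbr1, List.mem_singleton] at h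
      subst h; simp only [dsum_cons]; simp; omega
    | true =>
      simp only [nbr1, List.mem_cons, List.mem_map] at h
      rcases h with rfl | ⟨z, hz, rfl⟩
      · simp only [dsum_cons]; simp; omega
      · have := ih z hz
        simp only [dsum_cons]; omega

theorem forget_cons {r : ℕ} (c : SymR r) (s : List (SymR r)) :
    forget (c :: s) = c.isNone :: forget s := rfl

theorem measR {r : ℕ} (x y : List (SymR r)) (h : y ∈ nbrR x) :
    dsum (forget y) + 1 = dsum (forget x) := by
  induction x generalizing y with
  | nil => simp [nbrR] at h
  | cons c s ih =>
    cases c with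
    | some i =>
      simp only [nbrR, List.mem_singleton] at h
      subst h; simp only [forget_cons, dsum_cons]; simp; omega
    | none =>
      simp only [nbrR, List.mem_append, List.mem_map, List.mem_finRange, true_and] at h
      rcases h with ⟨j, rfl⟩ | ⟨z, hz, rfl⟩
      · simp only [forget_cons, dsum_cons]; simp; omega
      · have := ih z hz
        simp only [forget_cons, dsum_cons, Option.isNone_none, Option.isNone_some] at *
        omega

theorem keylem {r : ℕ} (G : W → ℕ) (v : List (SymR r)) :
    ((nbrR v).map fun y => r ^ ((forget y).count true) * G (forget y)).sum
      = r ^ ((forget v).count true) * ((nbr1 (forget v)).map G).sum := by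
  induction v generalizing G with
  | nil => simp [nbrR, nbr1, forget]
  | cons c s ih =>
    cases c with
    | some i =>
      show r ^ ((forget s).count true) * G (forget s) + 0
          = r ^ ((false :: forget s).count true) * (G (forget s) + 0)
      simp [List.count_cons]
    | none =>
      simp only [nbrR, List.map_append, List.map_map, List.sum_append, forget_cons,
        Option.isNone_none, nbr1, List.map_cons, List.sum_cons]
      have hforget : (List.map (fun c : SymR r => Option.isNone c) s) = forget s := rfl
      have h1 : ((List.finRange r).map ((fun y => r ^ ((forget y).count true) * G (forget y))
            ∘ fun j => some j :: s)).sum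
          = r * (r ^ ((forget s).count true) * G (false :: forget s)) := by
        have e : ((fun y : List (SymR r) => r ^ ((forget y).count true) * G (forget y))
            ∘ fun j : Fin r => some j :: s)
            = fun _ => r ^ ((forget s).count true) * G (false :: forget s) := by
          funext j
          simp [Function.comp, forget_cons, List.count_cons]
        rw [e, List.map_const', List.sum_replicate, List.length_finRange, smul_eq_mul]
      have h2 : ((nbrR s).map ((fun y => r ^ ((forget y).count true) * G (forget y))
            ∘ fun x => none :: x)).sum
          = r * (r ^ ((forget s).count true)
            * ((nbr1 (forget s)).map (fun w => G (true :: w))).sum) := by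
        have e : ((fun y : List (SymR r) => r ^ ((forget y).count true) * G (forget y))
            ∘ fun x : List (SymR r) => none :: x)
            = fun y : List (SymR r) => r * (r ^ ((forget y).count true)
              * (fun w => G (true :: w)) (forget y)) := by
          funext y
          simp only [Function.comp, forget_cons, Option.isNone_none, List.count_cons,
            pow_succ]
          norm_num
          ring
        rw [e, List.sum_map_mul_left, ih (fun w => G (true :: w))]
      rw [h1, h2]
      have hc : (true :: forget s).count true = (forget s).count true + 1 := by
        simp [List.count_cons]
      rw [hc, pow_succ]
      have : (List.map (G ∘ fun x => true :: x) (nbr1 (forget s)))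
          = (List.map (fun w => G (true :: w)) (nbr1 (forget s))) := rfl
      rw [this]
      ring


theorem dR_eq (r : ℕ) : ∀ (n : ℕ) (v : List (SymR r)), dsum (forget v) = n →
    dR [] v = r ^ ((forget v).count true) * d1 [] (forget v) := by
  intro n
  induction n using Nat.strong_induction_on with
  | _ n ih =>
  intro v hn
  have hmR : ∀ (x y : List (SymR r)), downR x y →
      (fun z => dsum (forget z)) y + 1 = (fun z => dsum (forget z)) x :=
    fun x y h => measR x y ((downR_iff x y).mp h)
  have hm1 : ∀ (x y : W), down x y → dsum y + 1 = dsum x :=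
    fun x y h => meas1 x y ((down_iff x y).mp h)
  have hcardR := paths_card (R := downR (r := r)) (w := ([] : List (SymR r)))
      nbrR (fun x y => downR_iff x y) (fun x => nbrR_nodup x) hmR
  have hcard1 := paths_card (R := down) (w := ([] : W)) nbr1
      down_iff nbr1_nodup hm1
  by_cases hv : v = []
  · subst hv
    have u1 : Unique (Paths (downR (r := r)) ([] : List (SymR r)) []) := pathsUnique hmR
    have u2 : Unique (Paths down ([] : W) []) := pathsUnique hm1
    have e1 : dR ([] : List (SymR r)) [] = 1 := @Nat.card_unique _ ⟨u1.default⟩ (@Unique.instSubsingleton _ u1)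
    have e2 : d1 ([] : W) [] = 1 := @Nat.card_unique _ ⟨u2.default⟩ (@Unique.instSubsingleton _ u2)
    simp [forget, e1, e2]
  · have hWne : forget v ≠ [] := fun h => hv (by simpa [forget] using h)
    have e1 : dR [] v = ((nbrR v).map fun y => dR [] y).sum := (hcardR v).2 hv
    have e2 : d1 [] (forget v) = ((nbr1 (forget v)).map fun z => d1 [] z).sum :=
      (hcard1 (forget v)).2 hWne
    rw [e1, e2]
    have e3 : ((nbrR v).map fun y => dR [] y)
        = ((nbrR v).map fun y => r ^ ((forget y).count true) * d1 [] (forget y)) := by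
      apply List.map_congr_left
      intro y hy
      have hm := measR v y hy
      exact ih (dsum (forget y)) (by omega) y rfl
    rw [e3]
    exact keylem (fun z => d1 [] z) v

/-- In `YF^r` the number of saturated decreasing paths from `v` to the empty word is
`r^{d(v)}` times the corresponding number of paths from `s(v)` to the empty word in `YF`. -/
theorem stmt3 (r : ℕ) (hr : 1 ≤ r) (v : List (SymR r)) :
    dR [] v = r ^ ((forget v).count true) * d1 [] (forget v) :=
  dR_eq r (dsum (forget v)) v rfl
end

section
/- Let r ≥ 2, let u be a word over {1,2}, and let v be a vertex of YF^r. Then the sum over all w in YF^r with s(w) = u of the number of saturated decreasing paths from v to w in YF^r equals r^{d(v) - d(u)} · d_1(u, s(v)), where d denotes the number of 2's and d_1(u, s(v)) is the number of saturated decreasing paths from s(v) to u in the ordinary Young–Fibonacci graph. -/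
open Filter

/-! ### Auxiliary development -/

section Aux

variable {α β γ : Type*}

/-- Splitting a list at a distinguished element after a prefix of `P`-elements is unique,
provided the distinguished element does not satisfy `P`. -/
lemma split_unique {P : β → Prop} :
    ∀ {p₁ p₂ : List β} {a₁ a₂ : β} {s₁ s₂ : List β},
      p₁ ++ a₁ :: s₁ = p₂ ++ a₂ :: s₂ →
      (∀ c ∈ p₁, P c) → (∀ c ∈ p₂, P c) → ¬P a₁ → ¬P a₂ →
      p₁ = p₂ ∧ a₁ = a₂ ∧ s₁ = s₂ := by
  intro p₁
  induction p₁ with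
  | nil =>
    rintro p₂ a₁ a₂ s₁ s₂ h h₁ h₂ ha₁ ha₂
    cases p₂ with
    | nil =>
      simp only [List.nil_append, List.cons.injEq] at h
      exact ⟨rfl, h.1, h.2⟩
    | cons c p₂ =>
      simp only [List.nil_append, List.cons_append, List.cons.injEq] at h
      exact absurd (h.1 ▸ h₂ c (by simp)) ha₁
  | cons c p₁ ih =>
    rintro p₂ a₁ a₂ s₁ s₂ h h₁ h₂ ha₁ ha₂
    cases p₂ with
    | nil =>
      simp only [List.cons_append, List.nil_append, List.cons.injEq] at h
      exact absurd (h.1.symm ▸ h₁ c (by simp)) ha₂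
    | cons c' p₂ =>
      simp only [List.cons_append, List.cons.injEq] at h
      obtain ⟨h1, h2, h3⟩ := ih h.2 (fun x hx => h₁ x (by simp [hx]))
        (fun x hx => h₂ x (by simp [hx])) ha₁ ha₂
      exact ⟨by rw [h.1, h1], h2, h3⟩

/-- If `v.map f` splits as `A ++ c :: B`, then `v` splits correspondingly. -/
lemma map_split {f : β → γ} {c : γ} :
    ∀ {A : List γ} {v : List β} {B : List γ}, v.map f = A ++ c :: B →
      ∃ p a s, v = p ++ a :: s ∧ p.map f = A ∧ f a = c ∧ s.map f = B := by
  intro A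
  induction A with
  | nil =>
    intro v B h
    cases v with
    | nil => simp at h
    | cons a s =>
      simp only [List.map_cons, List.nil_append, List.cons.injEq] at h
      exact ⟨[], a, s, rfl, rfl, h.1, h.2⟩
  | cons x A ih =>
    intro v B h
    cases v with
    | nil => simp at h
    | cons a s =>
      simp only [List.map_cons, List.cons_append, List.cons.injEq] at h
      obtain ⟨p, a', s', rfl, hA, hc, hB⟩ := ih h.2
      exact ⟨a :: p, a', s', rfl, by simp [h.1, hA], hc, hB⟩

section PathCount

variable {R : α → α → Prop} {μ ν : α → ℕ}

/-- The number of saturated `R`-decreasing paths from `v` down to `w`. -/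
noncomputable def Dc (R : α → α → Prop) (w v : α) : ℕ :=
  Nat.card {L : List α // List.Chain R v L ∧ (v :: L).getLast (List.cons_ne_nil _ _) = w}

lemma chain_measure (hμ : ∀ x y, R x y → μ y + 1 = μ x) :
    ∀ {v : α} {L : List α}, List.Chain R v L →
      μ ((v :: L).getLast (List.cons_ne_nil _ _)) + L.length = μ v := by
  intro v L
  induction L generalizing v with
  | nil => intro _; simp
  | cons y L ih =>
    intro h
    replace h := List.chain_cons.mp h
    have h1 := ih h.2
    have h2 := hμ v y h.1
    rw [List.getLast_cons_cons]
    simp only [List.length_cons] at h1 ⊢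
    omega

lemma chain_mono (hν : ∀ x y, R x y → ν y ≤ ν x) :
    ∀ {v : α} {L : List α}, List.Chain R v L →
      ν ((v :: L).getLast (List.cons_ne_nil _ _)) ≤ ν v := by
  intro v L
  induction L generalizing v with
  | nil => intro _; simp
  | cons y L ih =>
    intro h
    replace h := List.chain_cons.mp h
    have h1 := ih h.2
    have h2 := hν v y h.1
    rw [List.getLast_cons_cons]
    omega

lemma path_eq_nil (hμ : ∀ x y, R x y → μ y + 1 = μ x) {v : α}
    (x : {L : List α // List.Chain R v L ∧ (v :: L).getLast (List.cons_ne_nil _ _) = v}) :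
    x = ⟨[], List.Chain.nil, rfl⟩ := by
  obtain ⟨L, hc, hl⟩ := x
  have hm := chain_measure hμ hc
  rw [hl] at hm
  have hL : L = [] := List.length_eq_zero_iff.mp (by omega)
  subst hL
  rfl

lemma Dc_self (hμ : ∀ x y, R x y → μ y + 1 = μ x) (v : α) : Dc R v v = 1 := by
  haveI : Unique {L : List α // List.Chain R v L ∧ (v :: L).getLast (List.cons_ne_nil _ _) = v} :=
    ⟨⟨⟨[], List.Chain.nil, rfl⟩⟩, fun x => path_eq_nil hμ x⟩
  exact Nat.card_unique

lemma Dc_zero (hμ : ∀ x y, R x y → μ y + 1 = μ x) {v w : α} (h : μ v ≤ μ w) (hne : w ≠ v) :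
    Dc R w v = 0 := by
  haveI : IsEmpty
      {L : List α // List.Chain R v L ∧ (v :: L).getLast (List.cons_ne_nil _ _) = w} := by
    constructor
    rintro ⟨L, hc, hl⟩
    have hm := chain_measure hμ hc
    rw [hl] at hm
    have hL : L = [] := List.length_eq_zero_iff.mp (by omega)
    subst hL
    exact hne hl.symm
  exact Nat.card_of_isEmpty

lemma Dc_mono (hν : ∀ x y, R x y → ν y ≤ ν x) {v w : α} (h : Dc R w v ≠ 0) : ν w ≤ ν v := by
  obtain ⟨⟨⟨L, hc, hl⟩⟩, -⟩ := Nat.card_ne_zero.mp h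
  have := chain_mono hν hc
  rwa [hl] at this

/-- Decomposition of nonempty saturated paths by their first step. -/
def pathEquiv (R : α → α → Prop) (v w : α) (hne : w ≠ v) :
    {L : List α // List.Chain R v L ∧ (v :: L).getLast (List.cons_ne_nil _ _) = w} ≃
      Σ y : {y // R v y},
        {L : List α // List.Chain R y.1 L ∧ (y.1 :: L).getLast (List.cons_ne_nil _ _) = w} where
  toFun x :=
    match x with
    | ⟨[], _, hl⟩ => absurd hl.symm hne
    | ⟨y :: L, hc, hl⟩ =>
        ⟨⟨y, (List.chain_cons.mp hc).1⟩, L, (List.chain_cons.mp hc).2,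
          by rw [← hl]; exact List.getLast_cons_cons.symm⟩
  invFun x := ⟨x.1.1 :: x.2.1, List.chain_cons.mpr ⟨x.1.2, x.2.2.1⟩,
    by rw [List.getLast_cons_cons]; exact x.2.2.2⟩
  left_inv x :=
    match x with
    | ⟨[], _, hl⟩ => absurd hl.symm hne
    | ⟨y :: L, hc, hl⟩ => rfl
  right_inv x := rfl

lemma finite_paths (hμ : ∀ x y, R x y → μ y + 1 = μ x)
    (hfin : ∀ x, Finite {y // R x y}) :
    ∀ (n : ℕ) (v : α), μ v ≤ n → ∀ w : α,
      Finite {L : List α // List.Chain R v L ∧ (v :: L).getLast (List.cons_ne_nil _ _) = w} := by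
  intro n
  induction n using Nat.strong_induction_on with
  | _ n IHn =>
    intro v hv w
    by_cases hvw : w = v
    · subst hvw
      haveI : Unique
          {L : List α // List.Chain R w L ∧ (w :: L).getLast (List.cons_ne_nil _ _) = w} :=
        ⟨⟨⟨[], List.Chain.nil, rfl⟩⟩, fun x => path_eq_nil hμ x⟩
      exact Finite.of_subsingleton
    · haveI := hfin v
      haveI : ∀ y : {y // R v y},
          Finite {L : List α // List.Chain R y.1 L ∧
            (y.1 :: L).getLast (List.cons_ne_nil _ _) = w} := fun y =>
        IHn (μ y.1) (by have := hμ v y.1 y.2; omega) y.1 le_rfl w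
      exact Finite.of_equiv _ (pathEquiv R v w hvw).symm

lemma finite_paths' (hμ : ∀ x y, R x y → μ y + 1 = μ x)
    (hfin : ∀ x, Finite {y // R x y}) (v w : α) :
    Finite {L : List α // List.Chain R v L ∧ (v :: L).getLast (List.cons_ne_nil _ _) = w} :=
  finite_paths hμ hfin (μ v) v le_rfl w

lemma Dc_rec (hμ : ∀ x y, R x y → μ y + 1 = μ x)
    (hfin : ∀ x, Finite {y // R x y}) {v w : α} (hne : w ≠ v) [Fintype {y // R v y}] :
    Dc R w v = ∑ y : {y // R v y}, Dc R w y.1 := by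
  haveI : ∀ y : {y // R v y},
      Finite {L : List α // List.Chain R y.1 L ∧
        (y.1 :: L).getLast (List.cons_ne_nil _ _) = w} := fun y =>
    finite_paths' hμ hfin y.1 w
  letI : ∀ y : {y // R v y},
      Fintype {L : List α // List.Chain R y.1 L ∧
        (y.1 :: L).getLast (List.cons_ne_nil _ _) = w} := fun y => Fintype.ofFinite _
  rw [Dc, Nat.card_congr (pathEquiv R v w hne), Nat.card_eq_fintype_card, Fintype.card_sigma]
  exact Finset.sum_congr rfl fun y _ => by rw [Dc, Nat.card_eq_fintype_card]

end PathCount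

/-! ### Facts about `down` and `downR` -/

lemma dsum_down {x y : W} (h : down x y) : dsum y + 1 = dsum x := by
  rcases h with ⟨p, s, hp, rfl, rfl⟩ | ⟨p, s, hp, rfl, rfl⟩ <;>
    simp [dsum] <;> omega

lemma count_down {x y : W} (h : down x y) :
    (y.length + 1 = x.length ∧ y.count true = x.count true) ∨
    (y.length = x.length ∧ y.count true + 1 = x.count true) := by
  rcases h with ⟨p, s, hp, rfl, rfl⟩ | ⟨p, s, hp, rfl, rfl⟩
  · left
    constructor
    · simp; omega
    · simp [List.count_append, List.count_cons]; try omega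
  · right
    constructor
    · simp
    · simp [List.count_append, List.count_cons]; try omega

lemma count_down_le {x y : W} (h : down x y) : y.count true ≤ x.count true := by
  rcases count_down h with ⟨-, h⟩ | ⟨-, h⟩ <;> omega

lemma forget_length {r : ℕ} (x : List (SymR r)) : (forget x).length = x.length :=
  List.length_map _

lemma downR_forget {r : ℕ} {x y : List (SymR r)} (h : downR x y) :
    down (forget x) (forget y) := by
  rcases h with ⟨p, s, i, hp, rfl, rfl⟩ | ⟨p, s, i, hp, rfl, rfl⟩
  · refine Or.inl ⟨forget p, forget s, fun c hc => ?_, by simp [forget], by simp [forget]⟩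
    obtain ⟨a, ha, rfl⟩ := List.mem_map.mp hc
    rw [hp a ha]; rfl
  · refine Or.inr ⟨forget p, forget s, fun c hc => ?_, by simp [forget], by simp [forget]⟩
    obtain ⟨a, ha, rfl⟩ := List.mem_map.mp hc
    rw [hp a ha]; rfl

lemma finite_down_nbhd (x : W) : Finite {y // down x y} := by
  haveI : Finite {l : List Bool // l.length ≤ x.length} :=
    (List.finite_length_le Bool x.length).to_subtype
  refine Finite.of_injective
    (fun y : {y // down x y} =>
      (⟨y.1, by rcases count_down y.2 with ⟨h, -⟩ | ⟨h, -⟩ <;> omega⟩ :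
        {l : List Bool // l.length ≤ x.length}))
    fun a b h => by
      apply Subtype.ext
      have h2 := congrArg Subtype.val h
      exact h2

lemma downR_length_le {r : ℕ} {x y : List (SymR r)} (h : downR x y) : y.length ≤ x.length := by
  have h1 := downR_forget h
  rcases count_down h1 with ⟨h2, -⟩ | ⟨h2, -⟩ <;>
    rw [forget_length, forget_length] at h2 <;> omega

lemma finite_downR_nbhd {r : ℕ} (x : List (SymR r)) : Finite {y // downR x y} := by
  haveI : Finite {l : List (SymR r) // l.length ≤ x.length} :=
    (List.finite_length_le (SymR r) x.length).to_subtype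
  refine Finite.of_injective
    (fun y : {y // downR x y} =>
      (⟨y.1, downR_length_le y.2⟩ : {l : List (SymR r) // l.length ≤ x.length}))
    fun a b h => by
      apply Subtype.ext
      have h2 := congrArg Subtype.val h
      exact h2

lemma finite_fiber {r : ℕ} (u : W) : Finite {w : List (SymR r) // forget w = u} := by
  haveI : Finite {l : List (SymR r) // l.length ≤ u.length} :=
    (List.finite_length_le (SymR r) u.length).to_subtype
  refine Finite.of_injective
    (fun w : {w : List (SymR r) // forget w = u} =>
      (⟨w.1, le_of_eq (by rw [← forget_length w.1, w.2])⟩ :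
        {l : List (SymR r) // l.length ≤ u.length}))
    fun a b h => by
      apply Subtype.ext
      have h2 := congrArg Subtype.val h
      exact h2

lemma d1_eq (w v : W) : d1 w v = Dc down w v := rfl

lemma dR_eq_s6 {r : ℕ} (w v : List (SymR r)) : dR w v = Dc downR w v := rfl

/-! ### Counting lifts of a single edge -/

lemma fib_del {r : ℕ} {v : List (SymR r)} {b P S : W}
    (hP : ∀ c ∈ P, c = true) (hv : forget v = P ++ false :: S) (hb : b = P ++ S) :
    Nat.card {y : {y : List (SymR r) // downR v y} // forget y.1 = b} = 1 := by
  have hv' : v.map (fun c => c.isNone) = P ++ false :: S := hv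
  obtain ⟨p, a, s, rfl, hpP, haf, hsS⟩ := map_split hv'
  obtain ⟨i, rfl⟩ : ∃ i, a = some i := by
    cases a with
    | none => simp at haf
    | some i => exact ⟨i, rfl⟩
  have hpn : ∀ c ∈ p, c = (none : SymR r) := fun c hc =>
    Option.isNone_iff_eq_none.mp (hP _ (hpP ▸ List.mem_map_of_mem hc))
  have hel : forget (p ++ s) = b := by
    show (p ++ s).map (fun c => c.isNone) = b
    rw [List.map_append, hpP, hsS, hb]
  haveI : Unique {y : {y : List (SymR r) // downR (p ++ some i :: s) y} // forget y.1 = b} := by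
    refine ⟨⟨⟨⟨p ++ s, Or.inl ⟨p, s, i, hpn, rfl, rfl⟩⟩, hel⟩⟩, ?_⟩
    rintro ⟨⟨y, hy⟩, hyb⟩
    rcases hy with ⟨p', s', i', hp', hveq, rfl⟩ | ⟨p', s', i', hp', hveq, rfl⟩
    · obtain ⟨h1, -, h3⟩ := split_unique (P := fun c => c = (none : SymR r)) hveq hpn hp'
        (by simp) (by simp)
      apply Subtype.ext
      apply Subtype.ext
      show p' ++ s' = p ++ s
      rw [← h1, ← h3]
    · exfalso
      have hl1 := congrArg List.length hveq
      have hl2 := congrArg List.length hyb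
      have hl3 := congrArg List.length hpP
      have hl4 := congrArg List.length hsS
      simp only [List.length_append, List.length_cons, List.length_map, forget_length, hb] at hl1 hl2 hl3 hl4
      omega
  exact Nat.card_unique

lemma fib_rep {r : ℕ} {v : List (SymR r)} {b P S : W}
    (hP : ∀ c ∈ P, c = true) (hv : forget v = P ++ true :: S) (hb : b = P ++ false :: S) :
    Nat.card {y : {y : List (SymR r) // downR v y} // forget y.1 = b} = r := by
  have hv' : v.map (fun c => c.isNone) = P ++ true :: S := hv
  obtain ⟨p, a, s, rfl, hpP, haf, hsS⟩ := map_split hv'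
  obtain rfl : a = none := Option.isNone_iff_eq_none.mp haf
  have hpn : ∀ c ∈ p, c = (none : SymR r) := fun c hc =>
    Option.isNone_iff_eq_none.mp (hP _ (hpP ▸ List.mem_map_of_mem hc))
  have key : ∀ i : Fin r, forget (p ++ some i :: s) = b := fun i => by
    show (p ++ some i :: s).map (fun c => c.isNone) = b
    rw [List.map_append, List.map_cons, hpP, hsS, hb]
    rfl
  have hbij : Function.Bijective
      (fun i : Fin r =>
        (⟨⟨p ++ some i :: s, Or.inr ⟨p, s, i, hpn, rfl, rfl⟩⟩, key i⟩ :
          {y : {y : List (SymR r) // downR (p ++ none :: s) y} // forget y.1 = b})) := by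
    constructor
    · intro i j hij
      have h1 : p ++ some i :: s = p ++ some j :: s := congrArg (fun z => z.1.1) hij
      have h2 := List.append_cancel_left h1
      simp only [List.cons.injEq, Option.some.injEq] at h2
      exact h2.1
    · rintro ⟨⟨y, hy⟩, hyb⟩
      rcases hy with ⟨p', s', i', hp', hveq, rfl⟩ | ⟨p', s', i', hp', hveq, rfl⟩
      · exfalso
        have hl1 := congrArg List.length hveq
        have hl2 := congrArg List.length hyb
        have hl3 := congrArg List.length hpP
        have hl4 := congrArg List.length hsS
        simp only [List.length_append, List.length_cons, List.length_map, forget_length, hb] at hl1 hl2 hl3 hl4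
        omega
      · have hfp : (forget p') ++ false :: (forget s') = P ++ false :: S := by
          have : forget (p' ++ some i' :: s') = b := hyb
          rw [hb] at this
          simpa [forget] using this
        have hp'true : ∀ c ∈ forget p', c = true := fun c hc => by
          obtain ⟨x, hx, rfl⟩ := List.mem_map.mp hc
          rw [hp' x hx]; rfl
        obtain ⟨hPeq, -, -⟩ := split_unique (P := fun c => c = true) hfp hp'true hP
          (by simp) (by simp)
        have hlen : p.length = p'.length := by
          have e1 := congrArg List.length hPeq
          have e2 := congrArg List.length hpP
          simp only [forget_length, List.length_map] at e1 e2
          omega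
        obtain ⟨rfl, hss⟩ := List.append_inj hveq hlen
        obtain rfl : s = s' := by simpa using hss
        exact ⟨i', rfl⟩
  have := Nat.card_eq_of_bijective _ hbij
  rw [← this, Nat.card_eq_fintype_card, Fintype.card_fin]

/-! ### The main induction -/

theorem auxMain (r : ℕ) (n : ℕ) : ∀ (u : W) (v : List (SymR r)), dsum (forget v) = n →
    ∑' w : {w : List (SymR r) // forget w = u}, (dR w.1 v : ℝ) =
      (r : ℝ) ^ ((forget v).count true - u.count true) * d1 u (forget v) := by
  induction n using Nat.strong_induction_on with
  | _ n IH =>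
  intro u v hn
  classical
  haveI : Finite {w : List (SymR r) // forget w = u} := finite_fiber u
  letI : Fintype {w : List (SymR r) // forget w = u} := Fintype.ofFinite _
  rw [tsum_fintype]
  have hμ1 : ∀ x y : W, down x y → dsum y + 1 = dsum x := fun _ _ h => dsum_down h
  have hμR : ∀ x y : List (SymR r), downR x y → dsum (forget y) + 1 = dsum (forget x) :=
    fun _ _ h => dsum_down (downR_forget h)
  rcases lt_or_ge (dsum u) (dsum (forget v)) with hlt | hge
  · -- main case
    haveI hfinR : ∀ x : List (SymR r), Finite {y // downR x y} := finite_downR_nbhd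
    haveI hfin1 : ∀ x : W, Finite {y // down x y} := finite_down_nbhd
    letI : Fintype {y // downR v y} := Fintype.ofFinite _
    letI : Fintype {b // down (forget v) b} := Fintype.ofFinite _
    have hne : ∀ w : {w : List (SymR r) // forget w = u}, w.1 ≠ v := fun w h => by
      have : dsum u = dsum (forget v) := by rw [← w.2, h]
      omega
    have hnefv : u ≠ forget v := fun h => by rw [← h] at hlt; omega
    have step1 : ∀ w : {w : List (SymR r) // forget w = u},
        dR w.1 v = ∑ y : {y // downR v y}, dR w.1 y.1 := fun w =>
      Dc_rec (μ := fun x => dsum (forget x)) hμR hfinR (hne w)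
    set π : {y // downR v y} → {b // down (forget v) b} :=
      fun y => ⟨forget y.1, downR_forget y.2⟩ with hπ
    have perB : ∀ b : {b // down (forget v) b},
        (Nat.card {y : {y : List (SymR r) // downR v y} // forget y.1 = b.1} : ℝ) *
          ((r : ℝ) ^ (b.1.count true - u.count true) * (d1 u b.1 : ℝ)) =
        (r : ℝ) ^ ((forget v).count true - u.count true) * (d1 u b.1 : ℝ) := by
      rintro ⟨b, ⟨P, S, hP, hfv, hb1⟩ | ⟨P, S, hP, hfv, hb1⟩⟩
      · rw [fib_del hP hfv hb1]
        have hc : b.count true = (forget v).count true := by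
          subst hb1; rw [hfv]
          simp [List.count_append, List.count_cons]
          try omega
        rw [hc]
        push_cast
        ring
      · rw [fib_rep hP hfv hb1]
        have hc : b.count true + 1 = (forget v).count true := by
          subst hb1; rw [hfv]
          simp [List.count_append, List.count_cons]
          try omega
        by_cases hd : d1 u b = 0
        · simp [hd]
        · have hcu : u.count true ≤ b.count true :=
            Dc_mono (R := down) (ν := fun x => x.count true)
              (fun _ _ h => count_down_le h) hd
          rw [← hc]
          have he : b.count true + 1 - u.count true = (b.count true - u.count true) + 1 := by
            omega
          rw [he, pow_succ]
          ring
    calc (∑ w : {w : List (SymR r) // forget w = u}, (dR w.1 v : ℝ))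
        = ∑ w : {w : List (SymR r) // forget w = u},
            ∑ y : {y // downR v y}, (dR w.1 y.1 : ℝ) := by
          refine Finset.sum_congr rfl fun w _ => ?_
          rw [step1 w]
          push_cast
          rfl
      _ = ∑ y : {y // downR v y},
            ∑ w : {w : List (SymR r) // forget w = u}, (dR w.1 y.1 : ℝ) :=
          Finset.sum_comm
      _ = ∑ y : {y // downR v y},
            (r : ℝ) ^ ((π y).1.count true - u.count true) * (d1 u (π y).1 : ℝ) := by
          refine Finset.sum_congr rfl fun y _ => ?_
          have hy : dsum (forget y.1) < n := by
            have := hμR v y.1 y.2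
            omega
          have hIH := IH (dsum (forget y.1)) hy u y.1 rfl
          rw [tsum_fintype] at hIH
          exact hIH
      _ = ∑ b : {b // down (forget v) b},
            ∑ _y : {y : {y // downR v y} // π y = b},
              (r : ℝ) ^ (b.1.count true - u.count true) * (d1 u b.1 : ℝ) :=
          (Fintype.sum_fiberwise' π
            (fun b : {b // down (forget v) b} =>
              (r : ℝ) ^ (b.1.count true - u.count true) * (d1 u b.1 : ℝ))).symm
      _ = ∑ b : {b // down (forget v) b},
            (r : ℝ) ^ ((forget v).count true - u.count true) * (d1 u b.1 : ℝ) := by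
          refine Finset.sum_congr rfl fun b _ => ?_
          rw [Finset.sum_const, Finset.card_univ]
          have hcard : Fintype.card {y : {y // downR v y} // π y = b}
              = Nat.card {y : {y : List (SymR r) // downR v y} // forget y.1 = b.1} := by
            rw [← Nat.card_eq_fintype_card]
            exact Nat.card_congr (Equiv.subtypeEquivRight fun y => by
              constructor
              · intro h; exact congrArg Subtype.val h
              · intro h; exact Subtype.ext h)
          rw [hcard, nsmul_eq_mul]
          exact perB b
      _ = (r : ℝ) ^ ((forget v).count true - u.count true) * (d1 u (forget v) : ℝ) := by
          rw [← Finset.mul_sum]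
          congr 1
          have hrec : d1 u (forget v) = ∑ b : {b // down (forget v) b}, d1 u b.1 :=
            Dc_rec (μ := dsum) hμ1 hfin1 hnefv
          rw [hrec]
          push_cast
          rfl
  · -- degenerate cases
    by_cases hfv : forget v = u
    · subst hfv
      rw [Finset.sum_eq_single (⟨v, rfl⟩ : {w : List (SymR r) // forget w = forget v})]
      · have h1 : dR v v = 1 := Dc_self (μ := fun x => dsum (forget x)) hμR v
        have h2 : d1 (forget v) (forget v) = 1 := Dc_self (μ := dsum) hμ1 (forget v)
        rw [h1, h2]
        simp
      · rintro ⟨w, hw⟩ - hne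
        have hwv : w ≠ v := fun h => hne (Subtype.ext h)
        have h0 : dR w v = 0 :=
          Dc_zero (μ := fun x => dsum (forget x)) hμR
            (le_of_eq (by show dsum (forget v) = dsum (forget w); rw [hw])) hwv
        rw [h0]
        norm_num
      · intro h
        exact absurd (Finset.mem_univ _) h
    · have h1 : d1 u (forget v) = 0 :=
        Dc_zero (μ := dsum) hμ1 hge (fun h => hfv h.symm)
      have h0 : ∀ w : {w : List (SymR r) // forget w = u}, dR w.1 v = 0 := fun w =>
        Dc_zero (μ := fun x => dsum (forget x)) hμR
          (by show dsum (forget v) ≤ dsum (forget w.1); rw [w.2]; exact hge)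
          (fun h => hfv (h ▸ w.2))
      rw [h1]
      rw [Finset.sum_eq_zero fun w _ => by rw [h0 w]; norm_num]
      norm_num

end Aux

/-- `∑_{w : s(w) = u} d_r(w, v) = r^{d(v) - d(u)} ⋅ d_1(u, s(v))`. -/
theorem stmt6 (r : ℕ) (hr : 2 ≤ r) (u : W) (v : List (SymR r)) :
    ∑' w : {w : List (SymR r) // forget w = u}, (dR w.1 v : ℝ) =
      (r : ℝ) ^ ((forget v).count true - u.count true) * d1 u (forget v) :=
  auxMain r (dsum (forget v)) u v rfl
end

section
/- Let r ≥ 2, let u, v, w be words over {1_1,...,1_r,2}, and let i ≠ j be indices in {1,...,r}. Then the number of saturated decreasing paths in YF^r from v 1_j u down to w 1_i u is at most the number of saturated decreasing paths from v 2 u down to w 1_i u. -/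
open Filter

namespace YFr
variable {r : ℕ} (u : List (SymR r)) (j : Fin r)

/-- marked predicate -/
def markP (x : List (SymR r)) : Prop := (some j :: u) <:+ x

/-- replace the symbol at distance `|u|` from the right by `none` -/
def Tm (x : List (SymR r)) : List (SymR r) := x.take (x.length - (u.length + 1)) ++ none :: u

variable {u j}

lemma Tm_eq (a : List (SymR r)) : Tm u (a ++ some j :: u) = a ++ none :: u := by
  unfold Tm
  have h : (a ++ some j :: u).length - (u.length + 1) = a.length := by simp
  rw [h, List.take_left]

lemma suffix_unique {l₁ l₂ x : List (SymR r)} (h₁ : l₁ <:+ x) (h₂ : l₂ <:+ x)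
    (h : l₁.length = l₂.length) : l₁ = l₂ := by
  obtain ⟨t, rfl⟩ := h₁
  obtain ⟨t', ht'⟩ := h₂
  exact (List.append_inj ht'.symm (by have := congrArg List.length ht'; simp at this; omega)).2

lemma not_markP_append_none {a : List (SymR r)} (ha : ∀ c ∈ a, c = none) :
    ¬ markP u j (a ++ u) := by
  intro h
  have hlen : u.length + 1 ≤ a.length + u.length := by
    have := h.length_le; simpa using this
  have hane : a ≠ [] := by rintro rfl; simp at hlen
  have hdec : a.dropLast ++ [a.getLast hane] = a := List.dropLast_append_getLast hane
  have hsuf : (a.getLast hane :: u) <:+ (a ++ u) := ⟨a.dropLast, by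
    rw [show a.getLast hane :: u = [a.getLast hane] ++ u from rfl, ← List.append_assoc, hdec]⟩
  have := suffix_unique h hsuf (by simp)
  have hlast : a.getLast hane = none := ha _ (List.getLast_mem hane)
  rw [hlast] at this
  simp at this

lemma not_markP_Tm {x : List (SymR r)} (hx : markP u j x) : ¬ markP u j (Tm u x) := by
  obtain ⟨a, rfl⟩ := hx
  rw [Tm_eq]
  intro h
  have hsuf : (none :: u) <:+ (a ++ none :: u) := ⟨a, rfl⟩
  have := suffix_unique h hsuf (by simp)
  simp at this

lemma Tm_inj {y y' : List (SymR r)} (hy : markP u j y) (hy' : markP u j y')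
    (h : Tm u y = Tm u y') : y = y' := by
  obtain ⟨a, rfl⟩ := hy
  obtain ⟨a', rfl⟩ := hy'
  rw [Tm_eq, Tm_eq] at h
  have := (List.append_inj h (by have := congrArg List.length h; simpa using this)).1
  rw [this]

/-- Main case analysis for one down-step out of a marked word. -/
lemma step_cases {x y : List (SymR r)} (hx : markP u j x) (hxy : downR x y) :
    (markP u j y ∧ downR (Tm u x) (Tm u y)) ∨
    (¬ markP u j y ∧ ∃ a, (∀ c ∈ a, c = none) ∧ x = a ++ some j :: u ∧ y = a ++ u) := by
  obtain ⟨a, ha⟩ := hx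
  rcases hxy with ⟨p, s, k, hp, hx', hy'⟩ | ⟨p, s, k, hp, hx', hy'⟩
  · -- deletion of leftmost indexed 1
    rcases lt_trichotomy p.length a.length with h | h | h
    · -- the deleted 1 is strictly left of the mark
      have hpa : p = a.take p.length := by
        have := ha.trans hx'
        have h2 := congrArg (List.take p.length) this
        rw [List.take_append_of_le_length (le_of_lt h), List.take_left] at h2
        exact h2.symm
      have hsplit : a = p ++ a.drop p.length := by
        conv_lhs => rw [← List.take_append_drop p.length a, ← hpa]
      have hds : a.drop p.length ++ some j :: u = some k :: s := by
        have := ha.trans hx'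
        rw [hsplit, List.append_assoc] at this
        exact List.append_cancel_left this
      obtain ⟨c, t, hct⟩ := List.exists_cons_of_ne_nil (show a.drop p.length ≠ [] by
        intro hd; have := congrArg List.length hd; simp at this; omega)
      rw [hct] at hds
      have hc : c = some k := by simpa using congrArg (·.head?) hds
      have hs : s = t ++ some j :: u := by
        have h' := congrArg List.tail hds
        simpa using h'.symm
      left
      have hxe : x = (p ++ some k :: t) ++ some j :: u := by
        rw [← ha, hsplit, hct, hc]
      have hye : y = (p ++ t) ++ some j :: u := by rw [hy', hs]; simp
      constructor
      · exact ⟨p ++ t, hye.symm⟩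
      · rw [hxe, hye, Tm_eq, Tm_eq]
        exact Or.inl ⟨p, t ++ none :: u, k, hp, by simp, by simp⟩
    · -- the deleted 1 is the mark itself
      have hpa : p = a := by
        have := ha.trans hx'
        exact ((List.append_inj this h.symm).1).symm
      subst hpa
      have := List.append_cancel_left (ha.trans hx')
      have hk : some j = some k := by simpa using congrArg (·.head?) this
      have hs : u = s := by simpa using congrArg (·.tail) this
      right
      refine ⟨?_, p, hp, ha.symm, by rw [hy', hs]⟩
      rw [hy', ← hs]
      exact not_markP_append_none hp
    · exfalso
      have heq : a ++ some j :: u = p ++ some k :: s := ha.trans hx'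
      have hd := congrArg (List.drop a.length) heq
      rw [List.drop_left, List.drop_append_of_le_length h.le] at hd
      obtain ⟨c, t, hct⟩ := List.exists_cons_of_ne_nil (show p.drop a.length ≠ [] by
        intro hdn; have := congrArg List.length hdn; simp at this; omega)
      rw [hct] at hd
      have hc : some j = c := by simpa using congrArg List.head? hd
      have hcn : c = none := hp c (List.drop_subset a.length p (hct ▸ (List.mem_cons_self : c ∈ c :: t)))
      rw [hcn] at hc
      exact absurd hc (by simp)
  · -- replacement of a 2 by an indexed 1
    rcases lt_trichotomy p.length a.length with h | h | h
    · have hpa : p = a.take p.length := by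
        have := ha.trans hx'
        have h2 := congrArg (List.take p.length) this
        rw [List.take_append_of_le_length (le_of_lt h), List.take_left] at h2
        exact h2.symm
      have hsplit : a = p ++ a.drop p.length := by
        conv_lhs => rw [← List.take_append_drop p.length a, ← hpa]
      have hds : a.drop p.length ++ some j :: u = none :: s := by
        have := ha.trans hx'
        rw [hsplit, List.append_assoc] at this
        exact List.append_cancel_left this
      obtain ⟨c, t, hct⟩ := List.exists_cons_of_ne_nil (show a.drop p.length ≠ [] by
        intro hd; have := congrArg List.length hd; simp at this; omega)
      rw [hct] at hds
      have hc : c = none := by simpa using congrArg (·.head?) hds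
      have hs : s = t ++ some j :: u := by
        have h' := congrArg List.tail hds
        simpa using h'.symm
      left
      have hxe : x = (p ++ none :: t) ++ some j :: u := by
        rw [← ha, hsplit, hct, hc]
      have hye : y = (p ++ some k :: t) ++ some j :: u := by rw [hy', hs]; simp
      constructor
      · exact ⟨p ++ some k :: t, hye.symm⟩
      · rw [hxe, hye, Tm_eq, Tm_eq]
        exact Or.inr ⟨p, t ++ none :: u, k, hp, by simp, by simp⟩
    · exfalso
      have hpa : p = a := by
        have := ha.trans hx'
        exact ((List.append_inj this h.symm).1).symm
      subst hpa
      have := List.append_cancel_left (ha.trans hx')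
      have : (some j : SymR r) = none := by simpa using congrArg (·.head?) this
      exact absurd this (by simp)
    · exfalso
      have heq : a ++ some j :: u = p ++ none :: s := ha.trans hx'
      have hd := congrArg (List.drop a.length) heq
      rw [List.drop_left, List.drop_append_of_le_length h.le] at hd
      obtain ⟨c, t, hct⟩ := List.exists_cons_of_ne_nil (show p.drop a.length ≠ [] by
        intro hdn; have := congrArg List.length hdn; simp at this; omega)
      rw [hct] at hd
      have hc : some j = c := by simpa using congrArg List.head? hd
      have hcn : c = none := hp c (List.drop_subset a.length p (hct ▸ (List.mem_cons_self : c ∈ c :: t)))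
      rw [hcn] at hc
      exact absurd hc (by simp)


open Classical in
/-- Transform a chain starting at a marked word into the corresponding chain
starting at the 2-version, inserting one extra step where the mark gets deleted. -/
noncomputable def phiT (u : List (SymR r)) (j : Fin r) :
    List (SymR r) → List (List (SymR r)) → List (List (SymR r))
  | _, [] => []
  | x, y :: L => if markP u j y then Tm u y :: phiT u j y L else x :: y :: L

lemma phiT_spec : ∀ (L : List (List (SymR r))) (x : List (SymR r)),
    markP u j x → List.Chain downR x L →
    ¬ markP u j ((x :: L).getLast (List.cons_ne_nil _ _)) →
    List.Chain downR (Tm u x) (phiT u j x L) ∧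
      (Tm u x :: phiT u j x L).getLast (List.cons_ne_nil _ _) =
        (x :: L).getLast (List.cons_ne_nil _ _) := by
  intro L
  induction L with
  | nil =>
    intro x hx _ hlast
    exact absurd hx (by simpa using hlast)
  | cons y L ih =>
    intro x hx hch hlast
    replace hch := List.chain_cons.mp hch
    obtain ⟨hxy, hch⟩ := hch
    rw [List.getLast_cons (List.cons_ne_nil _ _)] at hlast
    by_cases hy : markP u j y
    · have hstep := step_cases hx hxy
      rcases hstep with ⟨_, hTT⟩ | ⟨hny, _⟩
      · have := ih y hy hch hlast
        rw [phiT, if_pos hy]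
        refine ⟨List.chain_cons.mpr ⟨hTT, this.1⟩, ?_⟩
        rw [List.getLast_cons (List.cons_ne_nil _ _),
          List.getLast_cons (List.cons_ne_nil _ _)]
        exact this.2
      · exact absurd hy hny
    · have hstep := step_cases hx hxy
      rcases hstep with ⟨hmy, _⟩ | ⟨_, a, ha, hxa, hya⟩
      · exact absurd hmy hy
      · rw [phiT, if_neg hy]
        refine ⟨?_, ?_⟩
        · refine List.chain_cons.mpr ⟨?_, List.chain_cons.mpr ⟨hxy, hch⟩⟩
          rw [hxa, Tm_eq]
          exact Or.inr ⟨a, u, j, ha, rfl, rfl⟩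
        · rw [List.getLast_cons (List.cons_ne_nil _ _),
            List.getLast_cons (List.cons_ne_nil _ _)]

lemma phiT_inj : ∀ (L M : List (List (SymR r))) (x : List (SymR r)),
    markP u j x → phiT u j x L = phiT u j x M → L = M := by
  intro L
  induction L with
  | nil =>
    intro M x hx h
    cases M with
    | nil => rfl
    | cons y M =>
      rw [phiT, phiT] at h
      by_cases hy : markP u j y
      · rw [if_pos hy] at h; exact absurd h (by simp)
      · rw [if_neg hy] at h; exact absurd h (by simp)
  | cons y L ih =>
    intro M x hx h
    cases M with
    | nil =>
      rw [phiT, phiT] at h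
      by_cases hy : markP u j y
      · rw [if_pos hy] at h; exact absurd h (by simp)
      · rw [if_neg hy] at h; exact absurd h (by simp)
    | cons z M =>
      rw [phiT, phiT] at h
      by_cases hy : markP u j y <;> by_cases hz : markP u j z
      · rw [if_pos hy, if_pos hz] at h
        have h1 : Tm u y = Tm u z := by simpa using congrArg List.head? h
        have hyz : y = z := Tm_inj hy hz h1
        subst hyz
        have h2 : phiT u j y L = phiT u j y M := by
          have := congrArg List.tail h; simpa using this
        rw [ih M y hy h2]
      · rw [if_pos hy, if_neg hz] at h
        have h1 : Tm u y = x := by simpa using congrArg List.head? h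
        exact absurd (h1 ▸ hx) (not_markP_Tm hy)
      · rw [if_neg hy, if_pos hz] at h
        have h1 : x = Tm u z := by simpa using congrArg List.head? h
        exact absurd (h1 ▸ hx) (not_markP_Tm hz)
      · rw [if_neg hy, if_neg hz] at h
        have := congrArg List.tail h
        simpa using this

/-- weight (digit sum) -/
def wtR (x : List (SymR r)) : ℕ := (x.map fun c => if c.isNone then 2 else 1).sum

lemma downR_wt {x y : List (SymR r)} (h : downR x y) : wtR y + 1 = wtR x := by
  rcases h with ⟨p, s, k, _, rfl, rfl⟩ | ⟨p, s, k, _, rfl, rfl⟩ <;>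
    simp [wtR] <;> omega

lemma downR_length {x y : List (SymR r)} (h : downR x y) : y.length ≤ x.length := by
  rcases h with ⟨p, s, k, _, rfl, rfl⟩ | ⟨p, s, k, _, rfl, rfl⟩ <;> simp

lemma chain_len : ∀ (L : List (List (SymR r))) (x), List.Chain downR x L → L.length ≤ wtR x := by
  intro L
  induction L with
  | nil => intro x _; simp
  | cons y M ih =>
    intro x h
    replace h := List.chain_cons.mp h
    have := ih y h.2
    have := downR_wt h.1
    simp only [List.length_cons]
    omega

lemma chain_mem_length : ∀ (L : List (List (SymR r))) (x),
    List.Chain downR x L → ∀ z ∈ L, z.length ≤ x.length := by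
  intro L
  induction L with
  | nil => intro x _ z hz; simp at hz
  | cons y M ih =>
    intro x h z hz
    replace h := List.chain_cons.mp h
    rcases List.mem_cons.mp hz with rfl | hz
    · exact downR_length h.1
    · exact le_trans (ih y h.2 z hz) (downR_length h.1)

lemma chains_finite (x e : List (SymR r)) :
    Finite {L : List (List (SymR r)) //
      List.Chain downR x L ∧ (x :: L).getLast (List.cons_ne_nil _ _) = e} := by
  classical
  set S' : Type _ := {l : List (SymR r) // l.length ≤ x.length} with hS'
  haveI : Finite S' := by
    have hS : {l : List (SymR r) | l.length ≤ x.length}.Finite := List.finite_length_le _ _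
    exact hS.to_subtype
  have hBig : {L : List S' | L.length ≤ wtR x}.Finite := List.finite_length_le _ _
  haveI := hBig.to_subtype
  refine Finite.of_injective
    (fun Lh => (⟨(Lh.1.attach.map fun z =>
        (⟨z.1, chain_mem_length _ _ Lh.2.1 z.1 z.2⟩ : S')),
      by simpa using chain_len Lh.1 x Lh.2.1⟩ : {L : List S' | L.length ≤ wtR x})) ?_
  intro ⟨L, hL⟩ ⟨M, hM⟩ h
  have h1 := congrArg (fun z => List.map Subtype.val z.1) h
  simp only [List.map_map] at h1
  have key : ∀ (N : List (List (SymR r))) (hN : ∀ z ∈ N, z.length ≤ x.length),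
      N.attach.map (Subtype.val ∘ fun z => (⟨z.1, hN z.1 z.2⟩ : S')) = N := by
    intro N hN
    have : (Subtype.val ∘ fun z : {z // z ∈ N} => (⟨z.1, hN z.1 z.2⟩ : S')) =
        fun z : {z // z ∈ N} => z.1 := rfl
    rw [this, List.attach_map_subtype_val]
  rw [key L (chain_mem_length _ _ hL.1), key M (chain_mem_length _ _ hM.1)] at h1
  exact Subtype.ext h1

end YFr

/-- `d_r(w 1_i u, v 1_j u) ≤ d_r(w 1_i u, v 2 u)` for `i ≠ j`. -/
theorem stmt7 (r : ℕ) (hr : 2 ≤ r) (u v w : List (SymR r)) (i j : Fin r) (hij : i ≠ j) :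
    dR (w ++ some i :: u) (v ++ some j :: u) ≤ dR (w ++ some i :: u) (v ++ none :: u) := by
  classical
  have hx0 : YFr.markP u j (v ++ some j :: u) := ⟨v, rfl⟩
  have hne : ¬ YFr.markP u j (w ++ some i :: u) := by
    intro h
    have h2 : (some i :: u) <:+ (w ++ some i :: u) := ⟨w, rfl⟩
    have h3 := YFr.suffix_unique h h2 (by simp)
    have : j = i := by simpa using h3
    exact hij this.symm
  haveI := YFr.chains_finite (v ++ none :: u) (w ++ some i :: u)
  unfold dR
  refine Nat.card_le_card_of_injective
    (fun Lh => ⟨YFr.phiT u j (v ++ some j :: u) Lh.1, by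
      have spec := YFr.phiT_spec Lh.1 (v ++ some j :: u) hx0 Lh.2.1
        (by rw [Lh.2.2]; exact hne)
      constructor
      · rw [show v ++ none :: u = YFr.Tm u (v ++ some j :: u) from (YFr.Tm_eq v).symm]
        exact spec.1
      · rw [show v ++ none :: u = YFr.Tm u (v ++ some j :: u) from (YFr.Tm_eq v).symm]
        rw [spec.2]
        exact Lh.2.2⟩) ?_
  intro a b hab
  exact Subtype.ext (YFr.phiT_inj a.1 b.1 _ hx0 (congrArg Subtype.val hab))
end

section
/- For any words u, v over {1_1,...,1_r,2} and any index j ∈ {1,...,r}: π(v2u) / π(v1_j u) ≥ 1/2, where π(x) = ∏_{i : g(x,i) > 1} (g(x,i) - 1)/g(x,i) and g(x,i) = β_0 + ... + β_{i-1} + 2i - 1 for x written as ... 2 1^{β_1} 2 1^{β_0} (β_k = number of 1's between the k-th and (k+1)-st 2 from the right). -/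
open Filter

noncomputable def F (g : ℕ) : ℝ := if 1 < g then ((g : ℝ) - 1) / g else 1

lemma idxTrue_append_left (A L : List Bool) : ∀ k, 1 ≤ k → k ≤ A.count true →
    idxTrue (A ++ L) k = idxTrue A k := by
  induction A with
  | nil => intro k h1 h2; simp at h2; omega
  | cons c A ih =>
    intro k h1 h2
    cases c with
    | false =>
      simp only [List.cons_append, idxTrue, List.append_eq]
      rw [ih k h1 (by simpa using h2)]
    | true =>
      simp only [List.cons_append, idxTrue, List.append_eq]
      by_cases hk : k ≤ 1
      · simp [hk]
      · have h2' : k - 1 ≤ A.count true := by simp [List.count_cons] at h2; omega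
        simp only [hk, if_false]
        rw [ih (k - 1) (by omega) h2']

lemma idxTrue_append_right (A L : List Bool) : ∀ k, A.count true < k →
    idxTrue (A ++ L) k = A.length + idxTrue L (k - A.count true) := by
  induction A with
  | nil => intro k h; simp
  | cons c A ih =>
    intro k h
    cases c with
    | false =>
      have hc : (false :: A).count true = A.count true := by simp
      simp only [List.cons_append, idxTrue, List.append_eq]
      rw [ih k (by omega)]
      simp [hc]; omega
    | true =>
      have hc : (true :: A).count true = A.count true + 1 := by simp
      have hk : ¬ k ≤ 1 := by omega
      simp only [List.cons_append, idxTrue, List.append_eq, hk, if_false]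
      rw [ih (k - 1) (by omega)]
      have : k - 1 - A.count true = k - (true :: A).count true := by omega
      simp [this]; omega

lemma F_pos (g : ℕ) : 0 < F g := by
  unfold F
  split
  · next h =>
    have : (1 : ℝ) < g := by exact_mod_cast h
    exact div_pos (by linarith) (by linarith)
  · exact one_pos

lemma half_le_F (g : ℕ) : 1 / 2 ≤ F g := by
  unfold F
  split
  · next h =>
    have h2 : (2 : ℝ) ≤ g := by exact_mod_cast h
    rw [le_div_iff₀ (by linarith)]
    linarith
  · norm_num

lemma F_mono_succ (g : ℕ) (h : 2 ≤ g) : F g ≤ F (g + 1) := by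
  unfold F
  have hg : (2 : ℝ) ≤ g := by exact_mod_cast h
  rw [if_pos (by omega), if_pos (by omega)]
  push_cast
  rw [div_le_div_iff₀ (by linarith) (by linarith)]
  nlinarith

lemma pik_eq (x : W) : pik x 1 = ∏ j ∈ Finset.Icc 1 (x.count true), F (gv x j) := by
  unfold pik F
  apply Finset.prod_congr rfl
  intro j _
  norm_num

lemma piW_pos (x : W) : 0 < piW x := by
  rw [piW, pik_eq]
  exact Finset.prod_pos fun _ _ => F_pos _

lemma Icc_one_eq_Ioc (n : ℕ) : Finset.Icc 1 n = Finset.Ioc 0 n := by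
  ext x; simp; omega

lemma key_ineq (U V : List Bool) :
    piW (V ++ false :: U) ≤ 2 * piW (V ++ true :: U) := by
  set A := U.reverse with hA
  set B := V.reverse with hB
  set m := U.count true with hm
  set M := V.count true with hM
  have hAc : A.count true = m := by simp [hA, hm, List.count_reverse]
  have hAl : A.length = U.length := by simp [hA]
  have hxrev : (V ++ true :: U).reverse = A ++ true :: B := by simp [hA, hB]
  have hyrev : (V ++ false :: U).reverse = A ++ false :: B := by simp [hA, hB]
  have hcX : (V ++ true :: U).count true = m + M + 1 := by
    simp [List.count_append, hm, hM]; omega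
  have hcY : (V ++ false :: U).count true = m + M := by
    simp [List.count_append, hm, hM]; omega
  have hgeq : ∀ k ∈ Finset.Ioc 0 m,
      F (gv (V ++ true :: U) k) = F (gv (V ++ false :: U) k) := by
    intro k hk
    simp only [Finset.mem_Ioc] at hk
    unfold gv
    rw [hxrev, hyrev, idxTrue_append_left A _ k (by omega) (by omega),
        idxTrue_append_left A _ k (by omega) (by omega)]
  have hga : gv (V ++ true :: U) (m + 1) = U.length + m + 1 := by
    unfold gv
    rw [hxrev, idxTrue_append_right A _ (m + 1) (by omega)]
    have h1 : m + 1 - A.count true = 1 := by omega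
    rw [h1]
    simp only [idxTrue, if_pos (le_refl 1)]
    omega
  have hgy : ∀ k, m < k →
      gv (V ++ false :: U) k = A.length + idxTrue B (k - m) + 1 + k := by
    intro k hk
    unfold gv
    rw [hyrev, idxTrue_append_right A _ k (by omega), hAc]
    simp only [idxTrue]
    omega
  have hgstep : ∀ k, m < k →
      gv (V ++ true :: U) (1 + k) = gv (V ++ false :: U) k + 1 := by
    intro k hk
    rw [hgy k hk]
    unfold gv
    rw [hxrev, idxTrue_append_right A _ (1 + k) (by omega), hAc]
    have hj : 1 + k - m = (k - m) + 1 := by omega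
    rw [hj]
    have h2 : idxTrue (true :: B) (k - m + 1) = idxTrue B (k - m) + 1 := by
      simp only [idxTrue]
      rw [if_neg (by omega)]
      congr 2
    rw [h2]
    omega
  have hgy2 : ∀ k, m < k → 2 ≤ gv (V ++ false :: U) k := by
    intro k hk
    rw [hgy k hk]
    omega
  -- split the products
  have hY : piW (V ++ false :: U) =
      (∏ j ∈ Finset.Ioc 0 m, F (gv (V ++ false :: U) j)) *
      ∏ j ∈ Finset.Ioc m (m + M), F (gv (V ++ false :: U) j) := by
    rw [piW, pik_eq, hcY, Icc_one_eq_Ioc]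
    exact (Finset.prod_Ioc_consecutive _ (Nat.zero_le m) (Nat.le_add_right m M)).symm
  have hX : piW (V ++ true :: U) =
      ((∏ j ∈ Finset.Ioc 0 m, F (gv (V ++ true :: U) j)) *
      ∏ j ∈ Finset.Ioc m (m + 1), F (gv (V ++ true :: U) j)) *
      ∏ j ∈ Finset.Ioc (m + 1) (m + M + 1), F (gv (V ++ true :: U) j) := by
    rw [piW, pik_eq, hcX, Icc_one_eq_Ioc]
    rw [Finset.prod_Ioc_consecutive _ (Nat.zero_le m) (by omega : m ≤ m + 1)]
    exact (Finset.prod_Ioc_consecutive _ (by omega : (0:ℕ) ≤ m + 1) (by omega)).symm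
  have hsingle : Finset.Ioc m (m + 1) = {m + 1} := by
    ext x; simp
  have hmap : Finset.Ioc (m + 1) (m + M + 1) =
      (Finset.Ioc m (m + M)).map (addLeftEmbedding 1) := by
    rw [Finset.map_add_left_Ioc]
    congr 1 <;> omega
  have htail : ∏ j ∈ Finset.Ioc (m + 1) (m + M + 1), F (gv (V ++ true :: U) j) =
      ∏ j ∈ Finset.Ioc m (m + M), F (gv (V ++ false :: U) j + 1) := by
    rw [hmap, Finset.prod_map]
    apply Finset.prod_congr rfl
    intro j hj
    simp only [Finset.mem_Ioc] at hj
    simp only [Function.Embedding.coeFn_mk, addLeftEmbedding_apply]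
    rw [hgstep j hj.1]
  set P := ∏ j ∈ Finset.Ioc 0 m, F (gv (V ++ false :: U) j) with hP
  set Q := ∏ j ∈ Finset.Ioc m (m + M), F (gv (V ++ false :: U) j) with hQ
  set Q' := ∏ j ∈ Finset.Ioc m (m + M), F (gv (V ++ false :: U) j + 1) with hQ'
  have hXval : piW (V ++ true :: U) = P * F (U.length + m + 1) * Q' := by
    rw [hX, htail, hsingle, Finset.prod_singleton, hga, Finset.prod_congr rfl hgeq]
  have hQle : Q ≤ Q' := by
    apply Finset.prod_le_prod
    · intro j _; exact (F_pos _).le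
    · intro j hj
      simp only [Finset.mem_Ioc] at hj
      exact F_mono_succ _ (hgy2 j hj.1)
  have hPpos : 0 < P := Finset.prod_pos fun _ _ => F_pos _
  have hQ'pos : 0 < Q' := Finset.prod_pos fun _ _ => F_pos _
  have hFa : 1 / 2 ≤ F (U.length + m + 1) := half_le_F _
  rw [hY, hXval]
  calc P * Q ≤ P * Q' := by
        exact mul_le_mul_of_nonneg_left hQle hPpos.le
    _ = 2 * (P * ((1/2) * Q')) := by ring
    _ ≤ 2 * (P * (F (U.length + m + 1) * Q')) := by gcongr
    _ = 2 * (P * F (U.length + m + 1) * Q') := by ring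

/-- `π(v 2 u) / π(v 1_j u) ≥ 1/2`. -/
theorem stmt8 (r : ℕ) (u v : List (SymR r)) (j : Fin r) :
    piW (forget (v ++ none :: u)) / piW (forget (v ++ some j :: u)) ≥ 1 / 2 := by
  have hx : forget (v ++ none :: u) = forget v ++ true :: forget u := by simp [forget]
  have hy : forget (v ++ some j :: u) = forget v ++ false :: forget u := by simp [forget]
  rw [hx, hy, ge_iff_le, le_div_iff₀ (piW_pos _)]
  have h := key_ineq (forget u) (forget v)
  linarith
end

section
/- The r-differential Young–Fibonacci graph YF^r is r-differential: for every vertex v, the number of upward edges from v exceeds the number of downward edges from v by exactly r. -/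
open Filter

section ProofAux

variable {r : ℕ}

private lemma key_inj {k k' : ℕ} {j j' : Fin r} {w w' : List (SymR r)}
    (h : List.replicate k (none : SymR r) ++ some j :: w
        = List.replicate k' none ++ some j' :: w') :
    k = k' ∧ j = j' ∧ w = w' := by
  induction k generalizing k' with
  | zero =>
    cases k' with
    | zero => simp_all
    | succ k' => simp [List.replicate_succ] at h
  | succ k ih =>
    cases k' with
    | zero => simp [List.replicate_succ] at h
    | succ k' =>
      simp only [List.replicate_succ, List.cons_append, List.cons.injEq] at h
      obtain ⟨h1, h2, h3⟩ := ih h.2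
      exact ⟨by omega, h2, h3⟩

private lemma split_rep {t k : ℕ} {rest : List (SymR r)} {c : SymR r} {s' : List (SymR r)}
    (hrest : rest = [] ∨ ∃ i s, rest = some i :: s)
    (h : List.replicate t (none : SymR r) ++ rest = List.replicate k none ++ c :: s') :
    (k < t ∧ c = none ∧ s' = List.replicate (t - k - 1) none ++ rest) ∨
    (∃ i s, rest = some i :: s ∧ k = t ∧ c = some i ∧ s' = s) := by
  induction t generalizing k with
  | zero =>
    rcases hrest with h0 | ⟨i, s, h0⟩ <;> subst h0
    · simp at h
    · cases k with
      | zero =>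
        simp only [List.replicate_zero, List.nil_append, List.cons.injEq] at h
        exact Or.inr ⟨i, s, rfl, rfl, h.1.symm, h.2.symm⟩
      | succ k => simp [List.replicate_succ] at h
  | succ t ih =>
    cases k with
    | zero =>
      simp only [List.replicate_succ, List.cons_append, List.replicate_zero,
        List.nil_append, List.cons.injEq] at h
      left
      refine ⟨Nat.succ_pos t, h.1.symm, ?_⟩
      simp [h.2]
    | succ k =>
      simp only [List.replicate_succ, List.cons_append, List.cons.injEq] at h
      rcases ih h.2 with ⟨h1, h2, h3⟩ | ⟨i, s, h1, h2, h3, h4⟩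
      · left
        refine ⟨by omega, h2, ?_⟩
        have he : t + 1 - (k + 1) - 1 = t - k - 1 := by omega
        rw [he]; exact h3
      · exact Or.inr ⟨i, s, h1, by omega, h3, h4⟩

private lemma prefix_rep {t k : ℕ} {rest s' : List (SymR r)}
    (hrest : rest = [] ∨ ∃ i s, rest = some i :: s)
    (h : List.replicate t (none : SymR r) ++ rest = List.replicate k none ++ s') :
    k ≤ t ∧ s' = List.replicate (t - k) none ++ rest := by
  induction t generalizing k with
  | zero =>
    cases k with
    | zero => simp_all
    | succ k =>
      exfalso
      rcases hrest with h0 | ⟨i, s, h0⟩ <;> subst h0 <;>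
        simp [List.replicate_succ] at h
  | succ t ih =>
    cases k with
    | zero =>
      simp only [List.replicate_zero, List.nil_append] at h
      exact ⟨Nat.zero_le _, by simp [← h]⟩
    | succ k =>
      simp only [List.replicate_succ, List.cons_append, List.cons.injEq] at h
      obtain ⟨h1, h2⟩ := ih h.2
      refine ⟨by omega, ?_⟩
      have he : t + 1 - (k + 1) = t - k := by omega
      rw [he]; exact h2

private lemma canon (x : List (SymR r)) :
    ∃ t rest, (rest = [] ∨ ∃ i s, rest = some i :: s) ∧
      x = List.replicate t none ++ rest := by
  induction x with
  | nil => exact ⟨0, [], Or.inl rfl, rfl⟩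
  | cons c x ih =>
    obtain ⟨t, rest, h1, h2⟩ := ih
    cases c with
    | none => exact ⟨t + 1, rest, h1, by simp [List.replicate_succ, h2]⟩
    | some i => exact ⟨0, some i :: x, Or.inr ⟨i, x, rfl⟩, rfl⟩

private lemma rep_split_eq {t k : ℕ} (hk : k < t) (a : SymR r) :
    List.replicate t a = List.replicate k a ++ a :: List.replicate (t - k - 1) a := by
  have ht : t = k + (1 + (t - k - 1)) := by omega
  rw [ht, List.replicate_add, List.replicate_add, List.replicate_succ]
  simp

private lemma all_none_replicate {p : List (SymR r)} (h : ∀ c ∈ p, c = none) :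
    p = List.replicate p.length none :=
  List.eq_replicate_iff.mpr ⟨rfl, h⟩

private lemma down_char {t : ℕ} {rest : List (SymR r)}
    (hrest : rest = [] ∨ ∃ i s, rest = some i :: s) (y : List (SymR r)) :
    downR (List.replicate t none ++ rest) y ↔
      (∃ k < t, ∃ j : Fin r,
        y = List.replicate k none ++ some j :: (List.replicate (t - k - 1) none ++ rest)) ∨
      (∃ i s, rest = some i :: s ∧ y = List.replicate t none ++ s) := by
  constructor
  · rintro (⟨p, s', i, hall, hx, hy⟩ | ⟨p, s', i, hall, hx, hy⟩)
    · rw [all_none_replicate hall] at hx hy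
      rcases split_rep hrest hx with ⟨h1, h2, h3⟩ | ⟨i', s, h1, h2, h3, h4⟩
      · exact absurd h2 (by simp)
      · right
        exact ⟨i', s, h1, by rw [hy, h2, h4]⟩
    · rw [all_none_replicate hall] at hx hy
      rcases split_rep hrest hx with ⟨h1, h2, h3⟩ | ⟨i', s, h1, h2, h3, h4⟩
      · left
        exact ⟨p.length, h1, i, by rw [hy, h3]⟩
      · exact absurd h3 (by simp)
  · rintro (⟨k, hk, j, hy⟩ | ⟨i, s, hr, hy⟩)
    · right
      refine ⟨List.replicate k none, List.replicate (t - k - 1) none ++ rest, j,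
        fun c hc => List.eq_of_mem_replicate hc, ?_, hy⟩
      rw [rep_split_eq hk (none : SymR r)]
      simp
    · left
      exact ⟨List.replicate t none, s, i, fun c hc => List.eq_of_mem_replicate hc,
        by rw [hr], hy⟩

private lemma up_char {t : ℕ} {rest : List (SymR r)}
    (hrest : rest = [] ∨ ∃ i s, rest = some i :: s) (y : List (SymR r)) :
    downR y (List.replicate t none ++ rest) ↔
      (∃ k ≤ t, ∃ j : Fin r,
        y = List.replicate k none ++ some j :: (List.replicate (t - k) none ++ rest)) ∨
      (∃ i s, rest = some i :: s ∧ y = List.replicate (t + 1) none ++ s) := by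
  constructor
  · rintro (⟨p, s', i, hall, hy, hx⟩ | ⟨p, s', i, hall, hy, hx⟩)
    · rw [all_none_replicate hall] at hx hy
      obtain ⟨h1, h2⟩ := prefix_rep hrest hx
      left
      exact ⟨p.length, h1, i, by rw [hy, h2]⟩
    · rw [all_none_replicate hall] at hx hy
      rcases split_rep hrest hx with ⟨h1, h2, h3⟩ | ⟨i', s, h1, h2, h3, h4⟩
      · exact absurd h2 (by simp)
      · right
        refine ⟨i', s, h1, ?_⟩
        rw [hy, h2, h4, List.replicate_succ' (n := t)]
        simp
  · rintro (⟨k, hk, j, hy⟩ | ⟨i, s, hr, hy⟩)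
    · left
      refine ⟨List.replicate k none, List.replicate (t - k) none ++ rest, j,
        fun c hc => List.eq_of_mem_replicate hc, hy, ?_⟩
      have ht : List.replicate t (none : SymR r)
          = List.replicate k none ++ List.replicate (t - k) none := by
        rw [← List.replicate_add]
        congr 1
        omega
      rw [ht, List.append_assoc]
    · right
      refine ⟨List.replicate t none, s, i,
        fun c hc => List.eq_of_mem_replicate hc, ?_, by rw [hr]⟩
      rw [hy, List.replicate_succ' (n := t)]
      simp

private lemma card_down {t : ℕ} {rest : List (SymR r)}
    (hrest : rest = [] ∨ ∃ i s, rest = some i :: s) :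
    Nat.card {y : List (SymR r) // downR (List.replicate t none ++ rest) y}
      = t * r + (if rest = [] then 0 else 1) := by
  rcases hrest with rfl | ⟨i, s, rfl⟩
  · have e : {y : List (SymR r) // downR (List.replicate t none ++ []) y} ≃
        {y : List (SymR r) //
          y ∈ (Finset.range t ×ˢ (Finset.univ : Finset (Fin r))).image
            (fun kj : ℕ × Fin r =>
              List.replicate kj.1 none ++ some kj.2 :: (List.replicate (t - kj.1 - 1) none ++ []))} :=
      Equiv.subtypeEquivRight fun y => by
        rw [down_char (Or.inl rfl)]
        simp only [Finset.mem_image, Finset.mem_product, Finset.mem_range, Finset.mem_univ,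
          and_true, Prod.exists]
        constructor
        · rintro (⟨k, hk, j, hy⟩ | ⟨i', s', he, _⟩)
          · exact ⟨k, j, hk, hy.symm⟩
          · simp at he
        · rintro ⟨k, j, hk, hy⟩
          exact Or.inl ⟨k, hk, j, hy.symm⟩
    rw [Nat.card_congr e, Nat.card_eq_finsetCard]
    rw [Finset.card_image_of_injOn, Finset.card_product, Finset.card_range,
      Finset.card_univ, Fintype.card_fin]
    · simp
    · intro a _ b _ hab
      obtain ⟨h1, h2, _⟩ := key_inj hab
      exact Prod.ext h1 h2
  · have e : {y : List (SymR r) // downR (List.replicate t none ++ some i :: s) y} ≃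
        {y : List (SymR r) //
          y ∈ insert (List.replicate t none ++ s)
            ((Finset.range t ×ˢ (Finset.univ : Finset (Fin r))).image
              (fun kj : ℕ × Fin r =>
                List.replicate kj.1 none ++
                  some kj.2 :: (List.replicate (t - kj.1 - 1) none ++ some i :: s)))} :=
      Equiv.subtypeEquivRight fun y => by
        rw [down_char (Or.inr ⟨i, s, rfl⟩)]
        simp only [Finset.mem_insert, Finset.mem_image, Finset.mem_product, Finset.mem_range,
          Finset.mem_univ, and_true, Prod.exists]
        constructor
        · rintro (⟨k, hk, j, hy⟩ | ⟨i', s', he, hy⟩)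
          · exact Or.inr ⟨k, j, hk, hy.symm⟩
          · simp only [List.cons.injEq, Option.some.injEq] at he
            obtain ⟨rfl, rfl⟩ := he
            exact Or.inl hy
        · rintro (hy | ⟨k, j, hk, hy⟩)
          · exact Or.inr ⟨i, s, rfl, hy⟩
          · exact Or.inl ⟨k, hk, j, hy.symm⟩
    rw [Nat.card_congr e, Nat.card_eq_finsetCard]
    rw [Finset.card_insert_of_notMem, Finset.card_image_of_injOn, Finset.card_product,
      Finset.card_range, Finset.card_univ, Fintype.card_fin]
    · simp
    · intro a _ b _ hab
      obtain ⟨h1, h2, _⟩ := key_inj hab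
      exact Prod.ext h1 h2
    · intro hmem
      simp only [Finset.mem_image, Finset.mem_product, Finset.mem_range, Finset.mem_univ,
        and_true, Prod.exists] at hmem
      obtain ⟨k, j, hk, heq⟩ := hmem
      apply congrArg List.length at heq
      simp only [List.length_append, List.length_replicate, List.length_cons] at heq
      omega

private lemma card_up {t : ℕ} {rest : List (SymR r)}
    (hrest : rest = [] ∨ ∃ i s, rest = some i :: s) :
    Nat.card {y : List (SymR r) // downR y (List.replicate t none ++ rest)}
      = (t + 1) * r + (if rest = [] then 0 else 1) := by
  rcases hrest with rfl | ⟨i, s, rfl⟩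
  · have e : {y : List (SymR r) // downR y (List.replicate t none ++ [])} ≃
        {y : List (SymR r) //
          y ∈ (Finset.range (t + 1) ×ˢ (Finset.univ : Finset (Fin r))).image
            (fun kj : ℕ × Fin r =>
              List.replicate kj.1 none ++ some kj.2 :: (List.replicate (t - kj.1) none ++ []))} :=
      Equiv.subtypeEquivRight fun y => by
        rw [up_char (Or.inl rfl)]
        simp only [Finset.mem_image, Finset.mem_product, Finset.mem_range, Finset.mem_univ,
          and_true, Prod.exists]
        constructor
        · rintro (⟨k, hk, j, hy⟩ | ⟨i', s', he, _⟩)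
          · exact ⟨k, j, by omega, hy.symm⟩
          · simp at he
        · rintro ⟨k, j, hk, hy⟩
          exact Or.inl ⟨k, by omega, j, hy.symm⟩
    rw [Nat.card_congr e, Nat.card_eq_finsetCard]
    rw [Finset.card_image_of_injOn, Finset.card_product, Finset.card_range,
      Finset.card_univ, Fintype.card_fin]
    · simp
    · intro a _ b _ hab
      obtain ⟨h1, h2, _⟩ := key_inj hab
      exact Prod.ext h1 h2
  · have e : {y : List (SymR r) // downR y (List.replicate t none ++ some i :: s)} ≃
        {y : List (SymR r) //
          y ∈ insert (List.replicate (t + 1) none ++ s)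
            ((Finset.range (t + 1) ×ˢ (Finset.univ : Finset (Fin r))).image
              (fun kj : ℕ × Fin r =>
                List.replicate kj.1 none ++
                  some kj.2 :: (List.replicate (t - kj.1) none ++ some i :: s)))} :=
      Equiv.subtypeEquivRight fun y => by
        rw [up_char (Or.inr ⟨i, s, rfl⟩)]
        simp only [Finset.mem_insert, Finset.mem_image, Finset.mem_product, Finset.mem_range,
          Finset.mem_univ, and_true, Prod.exists]
        constructor
        · rintro (⟨k, hk, j, hy⟩ | ⟨i', s', he, hy⟩)
          · exact Or.inr ⟨k, j, by omega, hy.symm⟩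
          · simp only [List.cons.injEq, Option.some.injEq] at he
            obtain ⟨rfl, rfl⟩ := he
            exact Or.inl hy
        · rintro (hy | ⟨k, j, hk, hy⟩)
          · exact Or.inr ⟨i, s, rfl, hy⟩
          · exact Or.inl ⟨k, by omega, j, hy.symm⟩
    rw [Nat.card_congr e, Nat.card_eq_finsetCard]
    rw [Finset.card_insert_of_notMem, Finset.card_image_of_injOn, Finset.card_product,
      Finset.card_range, Finset.card_univ, Fintype.card_fin]
    · simp
    · intro a _ b _ hab
      obtain ⟨h1, h2, _⟩ := key_inj hab
      exact Prod.ext h1 h2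
    · intro hmem
      simp only [Finset.mem_image, Finset.mem_product, Finset.mem_range, Finset.mem_univ,
        and_true, Prod.exists] at hmem
      obtain ⟨k, j, hk, heq⟩ := hmem
      apply congrArg List.length at heq
      simp only [List.length_append, List.length_replicate, List.length_cons] at heq
      omega

end ProofAux

/-- `YF^r` is `r`-differential: the number of upward edges from any vertex `x` exceeds
the number of downward edges from `x` by exactly `r`. -/
theorem stmt10 (r : ℕ) (hr : 1 ≤ r) (x : List (SymR r)) :
    Nat.card {y : List (SymR r) // downR y x} = Nat.card {y : List (SymR r) // downR x y} + r := by
  obtain ⟨t, rest, hrest, rfl⟩ := canon x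
  rw [card_up hrest, card_down hrest]
  have h2 : (t + 1) * r = t * r + r := by ring
  omega
end

section
/- Let v be an 'infinite word' over {1,2} (infinite to the left) with π(v) > 0, let β ∈ (0,1], and let (v_n) be a sequence of finite words converging letterwise to v such that π(v_n) → β·π(v). Then for every i ≥ 2, π_i(v_n) → β^i · π_i(v), where π_i(x) = ∏_{j: g(x,j) > i} (g(x,j) - i)/g(x,j). -/
open Filter

namespace S12

/-! ### Combinatorial lemmas about `idxTrue` -/

theorem idxTrue_ge : ∀ (y : List Bool) (j m : ℕ), 1 ≤ j → j ≤ y.count true →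
    (y.take m).count true < j → m ≤ idxTrue y j
  | [], j, m, h1, h2, _ => by simp at h2; omega
  | _ :: _, _, 0, _, _, _ => Nat.zero_le _
  | false :: ys, j, m+1, h1, h2, h3 => by
    simp only [List.count_cons, List.take_succ_cons, idxTrue, beq_iff_eq, reduceCtorEq,
      if_false, if_true] at h2 h3 ⊢
    have := idxTrue_ge ys j m h1 (by omega) (by omega)
    omega
  | true :: ys, j, m+1, h1, h2, h3 => by
    simp only [List.count_cons, List.take_succ_cons, idxTrue, beq_iff_eq, reduceCtorEq,
      if_false, if_true] at h2 h3 ⊢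
    have hj : 2 ≤ j := by omega
    have := idxTrue_ge ys (j-1) m (by omega) (by omega) (by omega)
    rw [if_neg (by omega)]
    omega

theorem idxTrue_take : ∀ (y : List Bool) (j m : ℕ), 1 ≤ j → j ≤ (y.take m).count true →
    idxTrue y j < m ∧ idxTrue y j = idxTrue (y.take m) j
  | [], j, m, h1, h2 => by simp at h2; omega
  | _ :: _, j, 0, h1, h2 => by simp at h2; omega
  | false :: ys, j, m+1, h1, h2 => by
    simp only [List.count_cons, List.take_succ_cons, idxTrue, beq_iff_eq, reduceCtorEq,
      if_false, if_true] at h2 ⊢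
    have := idxTrue_take ys j m h1 (by omega)
    omega
  | true :: ys, j, m+1, h1, h2 => by
    simp only [List.count_cons, List.take_succ_cons, idxTrue, beq_iff_eq, reduceCtorEq,
      if_false, if_true] at h2 ⊢
    by_cases hj : j ≤ 1
    · rw [if_pos hj, if_pos hj]; omega
    · have := idxTrue_take ys (j-1) m (by omega) (by omega)
      rw [if_neg hj, if_neg hj]
      omega

def cntv (v : ℕ → Bool) (m : ℕ) : ℕ := ((Finset.range m).filter fun s => v s = true).card

theorem cntv_succ (v : ℕ → Bool) (t : ℕ) : cntv v (t+1) = twoCount v t := rfl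

theorem count_take_eq (v : ℕ → Bool) (y : List Bool) (m : ℕ)
    (h : ∀ s < m, y[s]? = some (v s)) : (y.take m).count true = cntv v m := by
  induction m with
  | zero => simp [cntv]
  | succ k ih =>
    have hk := h k (by omega)
    rw [List.take_succ, List.count_append, ih (fun s hs => h s (by omega)), hk]
    have : k ∉ (Finset.range k).filter fun s => v s = true := by simp
    by_cases hv : v k = true <;>
      simp [cntv, Finset.range_add_one, Finset.filter_insert, hv, Finset.card_insert_of_notMem, this]

theorem idx_ge_pred (y : List Bool) (j : ℕ) (h1 : 1 ≤ j) (hj : j ≤ y.count true) :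
    j - 1 ≤ idxTrue y j := by
  refine idxTrue_ge y j (j-1) h1 hj (lt_of_le_of_lt (le_trans List.count_le_length ?_)
    (show j - 1 < j by omega))
  exact List.length_take_le _ _

theorem gv_spec (v : ℕ → Bool) (x : W) (j t₀ m : ℕ) (h1 : 1 ≤ j) (hm : t₀ < m)
    (hagree : ∀ s < m, x.reverse[s]? = some (v s))
    (ht : j ≤ twoCount v t₀) (hmin : ∀ t, t < t₀ → twoCount v t < j) :
    j ≤ x.count true ∧ gv x j = t₀ + j := by
  set y := x.reverse with hy
  have hcnt : (y.take (t₀+1)).count true = cntv v (t₀+1) :=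
    count_take_eq v y (t₀+1) (fun s hs => hagree s (by omega))
  have htc : j ≤ (y.take (t₀+1)).count true := by rw [hcnt, cntv_succ]; exact ht
  have hle : j ≤ y.count true := le_trans htc ((y.take_sublist _).count_le _)
  have h2 := idxTrue_take y j (t₀+1) h1 htc
  have h3 : t₀ ≤ idxTrue y j := by
    rcases Nat.eq_zero_or_pos t₀ with h | h
    · omega
    · refine idxTrue_ge y j t₀ h1 hle ?_
      rw [count_take_eq v y t₀ (fun s hs => hagree s (by omega))]
      have h4 := hmin (t₀ - 1) (by omega)
      rw [show t₀ = t₀ - 1 + 1 by omega, cntv_succ]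
      exact h4
  refine ⟨by rwa [hy, List.count_reverse] at hle, ?_⟩
  unfold gv
  rw [← hy]
  omega

theorem idx_far (v : ℕ → Bool) (x : W) (j m : ℕ) (h1 : 1 ≤ j)
    (hagree : ∀ s < m, x.reverse[s]? = some (v s))
    (hcnt : cntv v m < j) (hj : j ≤ x.count true) : m ≤ idxTrue x.reverse j := by
  refine idxTrue_ge _ j m h1 (by rwa [List.count_reverse]) ?_
  rw [count_take_eq v _ m hagree]; exact hcnt

/-! ### Analytic lemmas -/

noncomputable def fi (i g : ℕ) : ℝ := if i < g then ((g:ℝ) - i) / g else 1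

theorem fi_pos (i g : ℕ) : 0 < fi i g := by
  unfold fi
  split_ifs with h
  · have h0 : (0:ℝ) < g := by exact_mod_cast (by omega : 0 < g)
    have h1 : (i:ℝ) < g := by exact_mod_cast h
    exact div_pos (by linarith) h0
  · norm_num

theorem fi_le_one (i g : ℕ) : fi i g ≤ 1 := by
  unfold fi
  split_ifs with h
  · have h0 : (0:ℝ) < g := by exact_mod_cast (by omega : 0 < g)
    rw [div_le_one h0]
    have : (0:ℝ) ≤ i := by positivity
    linarith
  · exact le_refl 1

theorem abs_log_le {f c : ℝ} (hf0 : 0 < f) (hf1 : f ≤ 1) (hc0 : 0 < c) (hc : 1/c ≤ f) :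
    |Real.log f| ≤ Real.log c := by
  rw [abs_of_nonpos (Real.log_nonpos hf0.le hf1), ← Real.log_inv]
  refine Real.log_le_log (by positivity) ?_
  calc f⁻¹ ≤ (1/c)⁻¹ := inv_anti₀ (by positivity) hc
    _ = c := by rw [one_div, inv_inv]

noncomputable def phi (i g : ℕ) : ℝ := Real.log (fi i g) - (i:ℝ) * Real.log (fi 1 g)

theorem log_one_sub_bound {x : ℝ} (h0 : 0 ≤ x) (h1 : x ≤ 1/2) :
    |Real.log (1 - x) + x| ≤ 2 * x^2 := by
  have hx : |x| < 1 := by rw [abs_of_nonneg h0]; linarith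
  have h := Real.abs_log_sub_add_sum_range_le hx 1
  simp only [Finset.sum_range_one, pow_one, Nat.cast_zero, zero_add, div_one] at h
  rw [abs_of_nonneg h0] at h
  have h2 : x^2 / (1 - x) ≤ 2 * x^2 := by
    rw [div_le_iff₀ (by linarith)]
    nlinarith
  calc |Real.log (1 - x) + x| = |x + Real.log (1 - x)| := by rw [add_comm]
    _ ≤ x^2 / (1-x) := h
    _ ≤ 2 * x^2 := h2

theorem phi_large {i g : ℕ} (hi : 2 ≤ i) (hg : 2*i < g) : |phi i g| ≤ 4 * i^2 / (g:ℝ)^2 := by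
  have hgR : (0:ℝ) < g := by exact_mod_cast (by omega : 0 < g)
  have hiR : (1:ℝ) ≤ i := by exact_mod_cast (by omega : 1 ≤ i)
  have hgi : (2:ℝ) * i < g := by exact_mod_cast hg
  have e1 : fi i g = 1 - (i:ℝ)/g := by
    rw [fi, if_pos (by omega), sub_div, div_self (ne_of_gt hgR)]
  have e2 : fi 1 g = 1 - 1/(g:ℝ) := by
    rw [fi, if_pos (by omega), sub_div, div_self (ne_of_gt hgR)]
    norm_num
  have hx0 : (0:ℝ) ≤ (i:ℝ)/g := by positivity
  have hx1 : (i:ℝ)/g ≤ 1/2 := by rw [div_le_iff₀ hgR]; linarith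
  have hy0 : (0:ℝ) ≤ 1/(g:ℝ) := by positivity
  have hy1 : 1/(g:ℝ) ≤ 1/2 := by rw [div_le_div_iff₀ hgR (by norm_num)]; linarith
  have b1 := log_one_sub_bound hx0 hx1
  have b2 := log_one_sub_bound hy0 hy1
  have key : phi i g = (Real.log (1 - (i:ℝ)/g) + (i:ℝ)/g)
      - (i:ℝ) * (Real.log (1 - 1/(g:ℝ)) + 1/(g:ℝ)) := by
    rw [phi, e1, e2]; field_simp; ring
  rw [key]
  have h3 : |(Real.log (1 - (i:ℝ)/g) + (i:ℝ)/g) - (i:ℝ) * (Real.log (1 - 1/(g:ℝ)) + 1/(g:ℝ))|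
      ≤ |Real.log (1 - (i:ℝ)/g) + (i:ℝ)/g| + (i:ℝ) * |Real.log (1 - 1/(g:ℝ)) + 1/(g:ℝ)| := by
    refine le_trans (abs_sub _ _) ?_
    rw [abs_mul, abs_of_nonneg (by positivity : (0:ℝ) ≤ (i:ℝ))]
  refine le_trans h3 ?_
  have c1 : 2 * ((i:ℝ)/g)^2 = 2 * i^2 / g^2 := by ring
  have c2 : (i:ℝ) * (2 * (1/(g:ℝ))^2) = 2 * i / g^2 := by ring
  calc |Real.log (1 - (i:ℝ)/g) + (i:ℝ)/g| + (i:ℝ) * |Real.log (1 - 1/(g:ℝ)) + 1/(g:ℝ)|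
      ≤ 2 * ((i:ℝ)/g)^2 + (i:ℝ) * (2 * (1/(g:ℝ))^2) := by
        refine add_le_add b1 (mul_le_mul_of_nonneg_left b2 (by positivity))
    _ = 2 * i^2 / g^2 + 2 * i / g^2 := by rw [c1, c2]
    _ ≤ 4 * i^2 / (g:ℝ)^2 := by
        rw [← add_div, div_le_div_iff₀ (by positivity) (by positivity)]
        nlinarith [mul_le_mul_of_nonneg_right
          (show (2:ℝ)*i^2 + 2*i ≤ 4*i^2 by nlinarith [hiR]) (sq_nonneg (g:ℝ))]

theorem phi_small {i g : ℕ} (hi : 2 ≤ i) (hg : g ≤ 2*i) :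
    |phi i g| ≤ Real.log (2*i) + (i:ℝ) * Real.log 2 := by
  have h2i : (1:ℝ) ≤ 2*(i:ℝ) := by
    have : (2:ℝ) ≤ i := by exact_mod_cast hi
    linarith
  have hiR : (2:ℝ) ≤ i := by exact_mod_cast hi
  have b1 : |Real.log (fi i g)| ≤ Real.log (2*(i:ℝ)) := by
    refine abs_log_le (fi_pos i g) (fi_le_one i g) (by linarith) ?_
    unfold fi
    split_ifs with h
    · have hgR : (0:ℝ) < g := by exact_mod_cast (by omega : 0 < g)
      have h1 : (i:ℝ) < g := by exact_mod_cast h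
      have h2 : (g:ℝ) ≤ 2*i := by exact_mod_cast hg
      have h3 : (1:ℝ) ≤ (g:ℝ) - i := by
        have : (i:ℝ) + 1 ≤ g := by exact_mod_cast (by omega : i + 1 ≤ g)
        linarith
      rw [div_le_div_iff₀ (by linarith) hgR]
      nlinarith
    · rw [div_le_one (by linarith)]; linarith
  have b2 : |Real.log (fi 1 g)| ≤ Real.log 2 := by
    refine abs_log_le (fi_pos 1 g) (fi_le_one 1 g) (by norm_num) ?_
    unfold fi
    split_ifs with h
    · have hgR : (0:ℝ) < g := by exact_mod_cast (by omega : 0 < g)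
      have h2 : (2:ℝ) ≤ g := by exact_mod_cast (by omega : 2 ≤ g)
      rw [div_le_div_iff₀ (by norm_num) hgR]
      push_cast
      linarith
    · rw [div_le_one (by norm_num)]; norm_num
  calc |phi i g| ≤ |Real.log (fi i g)| + (i:ℝ) * |Real.log (fi 1 g)| := by
        rw [phi]
        refine le_trans (abs_sub _ _) ?_
        rw [abs_mul, abs_of_nonneg (by positivity : (0:ℝ) ≤ (i:ℝ))]
    _ ≤ Real.log (2*i) + (i:ℝ) * Real.log 2 := by
        push_cast
        refine add_le_add b1 (mul_le_mul_of_nonneg_left b2 (by positivity))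

noncomputable def Kc (i : ℕ) : ℝ := Real.log (2*i) + i * Real.log 2 + 1
noncomputable def Cc (i : ℕ) : ℝ := Kc i * ((i:ℝ)+1)^2 + 16*i^2
noncomputable def uu (i j : ℕ) : ℝ := Cc i / ((j:ℝ)+1)^2

theorem Kc_nonneg {i : ℕ} (hi : 2 ≤ i) : 0 ≤ Kc i := by
  unfold Kc
  have h2i : (2:ℝ) ≤ i := by exact_mod_cast hi
  have h1 : 0 ≤ Real.log (2*(i:ℝ)) := Real.log_nonneg (by linarith)
  have h2 : 0 ≤ Real.log 2 := Real.log_nonneg (by norm_num)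
  push_cast
  positivity

theorem Cc_nonneg {i : ℕ} (hi : 2 ≤ i) : 0 ≤ Cc i := by
  unfold Cc
  have := Kc_nonneg hi
  positivity

theorem uu_nonneg {i : ℕ} (hi : 2 ≤ i) (j : ℕ) : 0 ≤ uu i j := by
  unfold uu
  have := Cc_nonneg hi
  positivity

theorem phi_bound {i j g : ℕ} (hi : 2 ≤ i) (hj : 1 ≤ j) (hg : 2*j - 1 ≤ g) :
    |phi i g| ≤ uu i j := by
  have hj1 : (1:ℝ) ≤ (j:ℝ) := by exact_mod_cast hj
  have hjp : (0:ℝ) < ((j:ℝ)+1)^2 := by positivity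
  by_cases hcase : g ≤ 2*i
  · have hji : j ≤ i := by omega
    have hjiR : ((j:ℝ)+1)^2 ≤ ((i:ℝ)+1)^2 := by
      have : (j:ℝ) ≤ i := by exact_mod_cast hji
      nlinarith
    refine le_trans (phi_small hi hcase) ?_
    rw [uu, le_div_iff₀ hjp, Cc]
    have hK := Kc_nonneg hi
    have h5 : (Real.log (2*i) + (i:ℝ) * Real.log 2) * ((j:ℝ)+1)^2 ≤ Kc i * ((i:ℝ)+1)^2 := by
      calc (Real.log (2*i) + (i:ℝ) * Real.log 2) * ((j:ℝ)+1)^2 ≤ Kc i * ((j:ℝ)+1)^2 := by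
            refine mul_le_mul_of_nonneg_right ?_ (le_of_lt hjp)
            rw [Kc]; push_cast; linarith
        _ ≤ Kc i * ((i:ℝ)+1)^2 := mul_le_mul_of_nonneg_left hjiR hK
    nlinarith [sq_nonneg (i:ℝ)]
  · have hgi : 2*i < g := by omega
    refine le_trans (phi_large hi hgi) ?_
    have hgR : (0:ℝ) < g := by exact_mod_cast (by omega : 0 < g)
    have hgj : (j:ℝ) + 1 ≤ 2*(g:ℝ) := by
      have : j + 1 ≤ 2*g := by omega
      exact_mod_cast this
    calc 4 * (i:ℝ)^2 / (g:ℝ)^2 ≤ 16 * (i:ℝ)^2 / ((j:ℝ)+1)^2 := by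
          rw [div_le_div_iff₀ (by positivity) hjp]
          nlinarith [sq_nonneg (i:ℝ), mul_le_mul hgj hgj (by linarith) (by linarith)]
      _ ≤ uu i j := by
          rw [uu, div_le_div_iff₀ hjp hjp]
          have hK := Kc_nonneg hi
          unfold Cc
          nlinarith [mul_nonneg (mul_nonneg hK (sq_nonneg ((i:ℝ)+1))) hjp.le]

theorem summable_uu {i : ℕ} (hi : 2 ≤ i) : Summable (uu i) := by
  have h0 : Summable (fun n : ℕ => 1 / (n:ℝ)^2) := Real.summable_one_div_nat_pow.mpr (by norm_num)
  have h1 : Summable (fun n : ℕ => 1 / ((n:ℝ)+1)^2) := by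
    have := (summable_nat_add_iff 1).mpr h0
    refine this.congr fun n => ?_
    push_cast
    ring
  have h2 := h1.mul_left (Cc i)
  refine h2.congr fun n => ?_
  rw [uu]
  ring

theorem hasProd_exp {f : ℕ → ℝ} {s : ℝ} (h : HasSum f s) :
    HasProd (fun j => Real.exp (f j)) (Real.exp s) := by
  have h2 := (Real.continuous_exp.continuousAt (x := s)).tendsto.comp h
  exact h2.congr fun S => Real.exp_sum S f

theorem tprod_of_summable_log {F : ℕ → ℝ} (h0 : ∀ j, 0 < F j)
    (hs : Summable fun j => Real.log (F j)) :
    HasProd F (Real.exp (∑' j, Real.log (F j))) := by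
  have h := hasProd_exp hs.hasSum
  have hfe : (fun j => Real.exp (Real.log (F j))) = F := funext fun j => Real.exp_log (h0 j)
  rwa [hfe] at h

theorem prod_net_antitone {F : ℕ → ℝ} (h0 : ∀ j, 0 < F j) (h1 : ∀ j, F j ≤ 1) :
    HasProd F (⨅ S : Finset ℕ, ∏ j ∈ S, F j) := by
  have hant : Antitone (fun S : Finset ℕ => ∏ j ∈ S, F j) := by
    intro S T hST
    show (∏ j ∈ T, F j) ≤ ∏ j ∈ S, F j
    rw [← Finset.prod_sdiff hST (f := F)]
    have hp : ∏ j ∈ T \ S, F j ≤ 1 := Finset.prod_le_one (fun j _ => (h0 j).le) (fun j _ => h1 j)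
    have hq : 0 ≤ ∏ j ∈ S, F j := Finset.prod_nonneg (fun j _ => (h0 j).le)
    nlinarith
  have hbdd : BddBelow (Set.range fun S : Finset ℕ => ∏ j ∈ S, F j) := by
    refine ⟨0, ?_⟩
    rintro x ⟨S, rfl⟩
    exact Finset.prod_nonneg (fun j _ => (h0 j).le)
  exact tendsto_atTop_ciInf hant hbdd

theorem summable_log_of_pos_tprod {F : ℕ → ℝ} (h0 : ∀ j, 0 < F j) (h1 : ∀ j, F j ≤ 1)
    (hpos : 0 < ∏' j, F j) : Summable fun j => Real.log (F j) := by
  have hp := prod_net_antitone h0 h1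
  have hL : 0 < ⨅ S : Finset ℕ, ∏ j ∈ S, F j := by rwa [hp.tprod_eq] at hpos
  have key : ∀ S : Finset ℕ, ∑ j ∈ S, -Real.log (F j)
      ≤ -Real.log (⨅ S : Finset ℕ, ∏ j ∈ S, F j) := by
    intro S
    rw [Finset.sum_neg_distrib, ← Real.log_prod (fun j _ => (h0 j).ne')]
    have hle : (⨅ S : Finset ℕ, ∏ j ∈ S, F j) ≤ ∏ j ∈ S, F j := by
      refine ciInf_le ?_ S
      refine ⟨0, ?_⟩
      rintro x ⟨T, rfl⟩
      exact Finset.prod_nonneg (fun j _ => (h0 j).le)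
    exact neg_le_neg (Real.log_le_log hL hle)
  have hnn : ∀ j, 0 ≤ -Real.log (F j) := fun j =>
    neg_nonneg.mpr (Real.log_nonpos (h0 j).le (h1 j))
  have hsum : Summable fun j => -Real.log (F j) := summable_of_sum_le hnn key
  simpa using hsum.neg

/-! ### The factor functions -/

noncomputable def Ffin (x : W) (i j : ℕ) : ℝ :=
  if 1 ≤ j ∧ j ≤ x.count true then fi i (gv x j) else 1

noncomputable def Lfin (x : W) (i j : ℕ) : ℝ := Real.log (Ffin x i j)

open Classical in
noncomputable def Finf (v : ℕ → Bool) (i j : ℕ) : ℝ :=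
  if 1 ≤ j ∧ (∃ t, j ≤ twoCount v t) then fi i (gInf v j) else 1

noncomputable def Linf (v : ℕ → Bool) (i j : ℕ) : ℝ := Real.log (Finf v i j)

theorem Ffin_pos (x : W) (i j : ℕ) : 0 < Ffin x i j := by
  unfold Ffin; split_ifs
  · exact fi_pos _ _
  · norm_num

theorem Finf_pos (v : ℕ → Bool) (i j : ℕ) : 0 < Finf v i j := by
  unfold Finf; split_ifs
  · exact fi_pos _ _
  · norm_num

theorem Finf_le_one (v : ℕ → Bool) (i j : ℕ) : Finf v i j ≤ 1 := by
  unfold Finf; split_ifs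
  · exact fi_le_one _ _
  · exact le_refl 1

theorem pik_eq (x : W) (i : ℕ) :
    pik x i = ∏ j ∈ Finset.Icc 1 (x.count true), Ffin x i j := by
  refine Finset.prod_congr rfl fun j hj => ?_
  rw [Finset.mem_Icc] at hj
  rw [Ffin, if_pos hj, fi]

theorem pikInf_eq (v : ℕ → Bool) (i : ℕ) : pikInf v i = ∏' j, Finf v i j := by
  unfold pikInf Finf fi
  refine tprod_congr fun j => ?_
  split_ifs <;> first | rfl | tauto

theorem pik_exp (x : W) (i : ℕ) :
    pik x i = Real.exp (∑ j ∈ Finset.Icc 1 (x.count true), Lfin x i j) := by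
  rw [pik_eq, Real.exp_sum]
  exact Finset.prod_congr rfl fun j _ => (Real.exp_log (Ffin_pos x i j)).symm

theorem Lfin_in (x : W) (i j : ℕ) (h : 1 ≤ j ∧ j ≤ x.count true) :
    Lfin x i j = Real.log (fi i (gv x j)) := by
  rw [Lfin, Ffin, if_pos h]

theorem Lfin_out (x : W) (i j : ℕ) (h : ¬(1 ≤ j ∧ j ≤ x.count true)) : Lfin x i j = 0 := by
  rw [Lfin, Ffin, if_neg h, Real.log_one]

theorem Linf_in (v : ℕ → Bool) (i j : ℕ) (h : 1 ≤ j ∧ ∃ t, j ≤ twoCount v t) :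
    Linf v i j = Real.log (fi i (gInf v j)) := by
  rw [Linf, Finf, if_pos h]

theorem Linf_out (v : ℕ → Bool) (i j : ℕ) (h : ¬(1 ≤ j ∧ ∃ t, j ≤ twoCount v t)) :
    Linf v i j = 0 := by
  rw [Linf, Finf, if_neg h, Real.log_one]

end S12

/-- If finite words `vs n` converge letterwise to a left-infinite word `v` with `π(v) > 0`
and `π(vs n) → β ⋅ π(v)` with `β ∈ (0,1]`, then `π_i(vs n) → β^i ⋅ π_i(v)` for all `i ≥ 2`. -/

theorem stmt12 (v : ℕ → Bool) (hv : 0 < piInf v) (β : ℝ) (hβ : β ∈ Set.Ioc (0 : ℝ) 1)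
    (vs : ℕ → W)
    (hconv : ∀ j : ℕ, ∀ᶠ n in atTop, (vs n).reverse[j]? = some (v j))
    (hpi : Tendsto (fun n => piW (vs n)) atTop (nhds (β * piInf v)))
    (i : ℕ) (hi : 2 ≤ i) :
    Tendsto (fun n => pik (vs n) i) atTop (nhds (β ^ i * pikInf v i)) := by
  classical
  obtain ⟨hβ0, hβ1⟩ := hβ
  -- the two sequences of summands
  set a : ℕ → ℕ → ℝ := fun n j => S12.Lfin (vs n) i j - (i:ℝ) * S12.Lfin (vs n) 1 j with ha
  set b : ℕ → ℝ := fun j => S12.Linf v i j - (i:ℝ) * S12.Linf v 1 j with hb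
  have ha' : ∀ n j, a n j = S12.Lfin (vs n) i j - (i:ℝ) * S12.Lfin (vs n) 1 j := fun n j => rfl
  have hb' : ∀ j, b j = S12.Linf v i j - (i:ℝ) * S12.Linf v 1 j := fun j => rfl
  -- eventual agreement on prefixes
  have h_agree : ∀ m : ℕ, ∀ᶠ n in atTop, ∀ s < m, (vs n).reverse[s]? = some (v s) := by
    intro m
    induction m with
    | zero => exact Eventually.of_forall fun n s hs => absurd hs (Nat.not_lt_zero s)
    | succ k ih =>
      filter_upwards [ih, hconv k] with n h1 h2
      intro s hs
      rcases Nat.lt_succ_iff_lt_or_eq.mp hs with h | h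
      · exact h1 s h
      · subst h; exact h2
  -- eventual identification of gv with gInf
  have hval : ∀ j, 1 ≤ j → (∃ t, j ≤ twoCount v t) →
      ∀ᶠ n in atTop, (1 ≤ j ∧ j ≤ (vs n).count true) ∧ gv (vs n) j = gInf v j := by
    intro j hj hex
    set t₀ := sInf {t | j ≤ twoCount v t} with ht₀
    have ht : j ≤ twoCount v t₀ := Nat.sInf_mem hex
    have hmin : ∀ t, t < t₀ → twoCount v t < j := by
      intro t htl
      by_contra h
      push_neg at h
      have := Nat.sInf_le (show t ∈ {t | j ≤ twoCount v t} from h)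
      omega
    filter_upwards [h_agree (t₀+1)] with n hn
    have h := S12.gv_spec v (vs n) j t₀ (t₀+1) hj (Nat.lt_succ_self _) hn ht hmin
    exact ⟨⟨hj, h.1⟩, by rw [h.2, gInf, ← ht₀]⟩
  -- the uniform bound
  have hub : ∀ n j, ‖a n j‖ ≤ S12.uu i j := by
    intro n j
    rw [Real.norm_eq_abs]
    by_cases hj : 1 ≤ j
    · by_cases hcnt : j ≤ (vs n).count true
      · have hgv : 2*j - 1 ≤ gv (vs n) j := by
          have h1 := S12.idx_ge_pred (vs n).reverse j hj (by rwa [List.count_reverse])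
          rw [gv]; omega
        have : a n j = S12.phi i (gv (vs n) j) := by
          rw [ha' n j, S12.Lfin_in _ _ _ ⟨hj, hcnt⟩, S12.Lfin_in _ _ _ ⟨hj, hcnt⟩, S12.phi]
        rw [this]
        exact S12.phi_bound hi hj hgv
      · have : a n j = 0 := by
          rw [ha' n j, S12.Lfin_out _ _ _ (fun h => hcnt h.2),
            S12.Lfin_out _ _ _ (fun h => hcnt h.2)]
          ring
        rw [this, abs_zero]
        exact S12.uu_nonneg hi j
    · have : a n j = 0 := by
        rw [ha' n j, S12.Lfin_out _ _ _ (fun h => hj h.1),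
          S12.Lfin_out _ _ _ (fun h => hj h.1)]
        ring
      rw [this, abs_zero]
      exact S12.uu_nonneg hi j
  -- pointwise convergence
  have hpt : ∀ j, Tendsto (fun n => a n j) atTop (nhds (b j)) := by
    intro j
    by_cases hj : 1 ≤ j
    · by_cases hex : ∃ t, j ≤ twoCount v t
      · have hbj : b j = S12.phi i (gInf v j) := by
          rw [hb' j, S12.Linf_in _ _ _ ⟨hj, hex⟩, S12.Linf_in _ _ _ ⟨hj, hex⟩, S12.phi]
        refine Tendsto.congr' ?_ (tendsto_const_nhds (x := b j))
        filter_upwards [hval j hj hex] with n hn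
        rw [hbj, S12.phi, ha' n j, S12.Lfin_in _ _ _ hn.1, S12.Lfin_in _ _ _ hn.1, hn.2]
      · have hbj : b j = 0 := by
          rw [hb' j, S12.Linf_out _ _ _ (fun h => hex h.2),
            S12.Linf_out _ _ _ (fun h => hex h.2)]
          ring
        rw [hbj]
        rw [NormedAddCommGroup.tendsto_nhds_zero]
        intro ε hε
        obtain ⟨M₀, hM₀⟩ := exists_nat_gt (4 * (i:ℝ)^2 / ε)
        set M := M₀ + 2*i + 1 with hM
        filter_upwards [h_agree M] with n hn
        by_cases hcnt : j ≤ (vs n).count true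
        · push_neg at hex
          have hcv : S12.cntv v M < j := by
            rw [show M = (M - 1) + 1 by omega, S12.cntv_succ]
            exact hex (M-1)
          have hidx : M ≤ idxTrue (vs n).reverse j := S12.idx_far v (vs n) j M hj hn hcv hcnt
          have hgvM : M ≤ gv (vs n) j := by rw [gv]; omega
          have hgi : 2*i < gv (vs n) j := by omega
          have heq : a n j = S12.phi i (gv (vs n) j) := by
            rw [ha' n j, S12.Lfin_in _ _ _ ⟨hj, hcnt⟩, S12.Lfin_in _ _ _ ⟨hj, hcnt⟩, S12.phi]
          rw [Real.norm_eq_abs, heq]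
          refine lt_of_le_of_lt (S12.phi_large hi hgi) ?_
          have hgR : (0:ℝ) < gv (vs n) j := by exact_mod_cast (by omega : 0 < gv (vs n) j)
          have hMg : (M:ℝ) ≤ gv (vs n) j := by exact_mod_cast hgvM
          have hM1 : (1:ℝ) ≤ (M:ℝ) := by exact_mod_cast (by omega : 1 ≤ M)
          have hMM0 : (M₀:ℝ) ≤ M := by exact_mod_cast (by omega : M₀ ≤ M)
          have step1 : 4 * (i:ℝ)^2 / (gv (vs n) j:ℝ)^2 ≤ 4 * (i:ℝ)^2 / (M:ℝ)^2 := by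
            rw [div_le_div_iff₀ (by positivity) (by positivity)]
            nlinarith [mul_le_mul hMg hMg (by positivity) hgR.le, sq_nonneg (i:ℝ)]
          refine lt_of_le_of_lt step1 ?_
          rw [div_lt_iff₀ (by positivity)]
          have h4 : 4 * (i:ℝ)^2 / ε < M := lt_of_lt_of_le hM₀ hMM0
          rw [div_lt_iff₀ hε] at h4
          nlinarith [h4, mul_le_mul_of_nonneg_left hM1 (mul_nonneg hε.le (by linarith : (0:ℝ) ≤ (M:ℝ)))]
        · have : a n j = 0 := by
            rw [ha' n j, S12.Lfin_out _ _ _ (fun h => hcnt h.2),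
              S12.Lfin_out _ _ _ (fun h => hcnt h.2)]
            ring
          rw [this, norm_zero]
          exact hε
    · have hbj : b j = 0 := by
        rw [hb' j, S12.Linf_out _ _ _ (fun h => hj h.1),
          S12.Linf_out _ _ _ (fun h => hj h.1)]
        ring
      have haj : ∀ n, a n j = 0 := by
        intro n
        rw [ha' n j, S12.Lfin_out _ _ _ (fun h => hj h.1),
          S12.Lfin_out _ _ _ (fun h => hj h.1)]
        ring
      rw [hbj]
      exact Tendsto.congr (fun n => (haj n).symm) tendsto_const_nhds
  -- dominated convergence for the sums
  have htsum : Tendsto (fun n => ∑' j, a n j) atTop (nhds (∑' j, b j)) :=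
    tendsto_tsum_of_dominated_convergence (S12.summable_uu hi) hpt
      (Eventually.of_forall hub)
  -- summability facts
  have hbb : ∀ j, ‖b j‖ ≤ S12.uu i j := by
    intro j
    refine le_of_tendsto ((continuous_norm.tendsto (b j)).comp (hpt j))
      (Eventually.of_forall fun n => hub n j)
  have hSb : Summable b := Summable.of_norm_bounded (S12.summable_uu hi) hbb
  have hSL1 : Summable (S12.Linf v 1) := by
    refine S12.summable_log_of_pos_tprod (S12.Finf_pos v 1) (S12.Finf_le_one v 1) ?_
    rw [← S12.pikInf_eq v 1]
    exact hv
  have hSLi : Summable (S12.Linf v i) := by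
    have he : S12.Linf v i = fun j => b j + (i:ℝ) * S12.Linf v 1 j := by
      funext j
      rw [hb' j]
      ring
    rw [he]
    exact hSb.add (hSL1.mul_left _)
  have hprod1 : piInf v = Real.exp (∑' j, S12.Linf v 1 j) := by
    have h := S12.tprod_of_summable_log (S12.Finf_pos v 1) hSL1
    rw [piInf, S12.pikInf_eq v 1]
    exact h.tprod_eq
  have hprodi : pikInf v i = Real.exp (∑' j, S12.Linf v i j) := by
    have h := S12.tprod_of_summable_log (S12.Finf_pos v i) hSLi
    rw [S12.pikInf_eq v i]
    exact h.tprod_eq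
  have htb : ∑' j, b j = (∑' j, S12.Linf v i j) - (i:ℝ) * ∑' j, S12.Linf v 1 j := by
    rw [← tsum_mul_left, ← Summable.tsum_sub hSLi (hSL1.mul_left _)]
  -- the per-n identity
  have hid : ∀ n, pik (vs n) i = Real.exp (∑' j, a n j) * (piW (vs n))^i := by
    intro n
    have hzero : ∀ j ∉ Finset.Icc 1 ((vs n).count true), a n j = 0 := by
      intro j hj
      rw [Finset.mem_Icc] at hj
      rw [ha' n j, S12.Lfin_out _ _ _ hj, S12.Lfin_out _ _ _ hj]
      ring
    rw [tsum_eq_sum hzero, S12.pik_exp (vs n) i, piW, S12.pik_exp (vs n) 1,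
      ← Real.exp_nat_mul, ← Real.exp_add]
    congr 1
    have hsum : ∑ j ∈ Finset.Icc 1 ((vs n).count true), a n j
        = (∑ j ∈ Finset.Icc 1 ((vs n).count true), S12.Lfin (vs n) i j)
          - (i:ℝ) * ∑ j ∈ Finset.Icc 1 ((vs n).count true), S12.Lfin (vs n) 1 j := by
      rw [Finset.mul_sum, ← Finset.sum_sub_distrib]
    rw [hsum]
    ring
  -- final assembly
  have hlim2 : Tendsto (fun n => Real.exp (∑' j, a n j) * (piW (vs n))^i) atTop
      (nhds (Real.exp (∑' j, b j) * (β * piInf v)^i)) :=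
    ((Real.continuous_exp.tendsto _).comp htsum).mul (hpi.pow i)
  have hfin : Real.exp (∑' j, b j) * (β * piInf v)^i = β ^ i * pikInf v i := by
    rw [htb, hprodi, hprod1, mul_pow, ← Real.exp_nat_mul, Real.exp_sub]
    field_simp
  rw [← hfin]
  exact Tendsto.congr (fun n => (hid n).symm) hlim2
end

section
/- Let r ≥ 1 and let (v_n) be a sequence of vertices of YF^r converging letterwise to an infinite word v with π(v_n) → 0. Then for every fixed a ≥ 1 and i ≥ 1, the products ∏_{j=a}^{d(v_n)} (g(v_n,j) - i)/g(v_n,j) tend to 0 as n → ∞. -/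
open Filter

lemma le_gv (x : W) (j : ℕ) : j ≤ gv x j := Nat.le_add_left j _

lemma piW_nonneg (x : W) : 0 ≤ piW x := by
  unfold piW pik
  apply Finset.prod_nonneg
  intro j hj
  split
  · apply div_nonneg _ (by positivity)
    have : (1:ℝ) ≤ (gv x j : ℝ) := by exact_mod_cast Nat.one_le_iff_ne_zero.mpr (by omega)
    push_cast
    linarith
  · norm_num

lemma key_bound (x : W) (a i : ℕ) (ha : 1 ≤ a) (hi : 1 ≤ i) :
    |∏ j ∈ Finset.Icc a (x.count true), ((gv x j : ℝ) - i) / gv x j|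
      ≤ (i : ℝ) ^ (max a (i + 1)) * 2 ^ (max a (i + 1) - 1) * piW x := by
  set b := max a (i + 1) with hb
  set d := x.count true with hd
  have hab : a ≤ b := le_max_left _ _
  have hib : i + 1 ≤ b := le_max_right _ _
  have hb1 : 1 ≤ b := le_trans ha hab
  -- basic positivity of gv
  have hgpos : ∀ j, 1 ≤ j → (1 : ℝ) ≤ (gv x j : ℝ) := by
    intro j hj
    exact_mod_cast le_trans hj (le_gv x j)
  rw [Finset.abs_prod]
  -- split the product at b
  rw [← Finset.prod_filter_mul_prod_filter_not (Finset.Icc a d) (fun j => j < b)]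
  have hfilt2 : (Finset.Icc a d).filter (fun j => ¬ j < b) = Finset.Icc b d := by
    ext j; simp only [Finset.mem_filter, Finset.mem_Icc, not_lt]; omega
  rw [hfilt2]
  have part1 : ∏ j ∈ (Finset.Icc a d).filter (fun j => j < b),
      |((gv x j : ℝ) - i) / gv x j| ≤ (i : ℝ) ^ b := by
    have hcard : ((Finset.Icc a d).filter (fun j => j < b)).card ≤ b := by
      have hsub : (Finset.Icc a d).filter (fun j => j < b) ⊆ Finset.Ico a b := by
        intro j hj
        simp only [Finset.mem_filter, Finset.mem_Icc] at hj
        simp only [Finset.mem_Ico]; omega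
      calc ((Finset.Icc a d).filter (fun j => j < b)).card ≤ (Finset.Ico a b).card :=
            Finset.card_le_card hsub
        _ = b - a := Nat.card_Ico a b
        _ ≤ b := Nat.sub_le _ _
    have hfac : ∀ j ∈ (Finset.Icc a d).filter (fun j => j < b),
        |((gv x j : ℝ) - i) / gv x j| ≤ (i : ℝ) := by
      intro j hj
      simp only [Finset.mem_filter, Finset.mem_Icc] at hj
      have hg : (1 : ℝ) ≤ (gv x j : ℝ) := hgpos j (le_trans ha hj.1.1)
      have hgpos' : (0 : ℝ) < (gv x j : ℝ) := by linarith
      rw [abs_div, abs_of_pos hgpos', div_le_iff₀ hgpos']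
      have hi' : (1 : ℝ) ≤ (i : ℝ) := by exact_mod_cast hi
      rw [abs_le]
      constructor <;> nlinarith
    calc ∏ j ∈ (Finset.Icc a d).filter (fun j => j < b), |((gv x j : ℝ) - i) / gv x j|
        ≤ ∏ _j ∈ (Finset.Icc a d).filter (fun j => j < b), (i : ℝ) :=
          Finset.prod_le_prod (fun j _ => abs_nonneg _) hfac
      _ = (i : ℝ) ^ ((Finset.Icc a d).filter (fun j => j < b)).card :=
          Finset.prod_const _
      _ ≤ (i : ℝ) ^ b := by
          apply pow_le_pow_right₀ (by exact_mod_cast hi) hcard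
  have part2 : ∏ j ∈ Finset.Icc b d, |((gv x j : ℝ) - i) / gv x j|
      ≤ 2 ^ (b - 1) * piW x := by
    have habs : ∀ j ∈ Finset.Icc b d,
        |((gv x j : ℝ) - i) / gv x j| = ((gv x j : ℝ) - i) / gv x j := by
      intro j hj
      simp only [Finset.mem_Icc] at hj
      have hgj : (i : ℝ) + 1 ≤ (gv x j : ℝ) := by
        have : i + 1 ≤ gv x j := le_trans (le_trans hib hj.1) (le_gv x j)
        exact_mod_cast this
      apply abs_of_nonneg
      apply div_nonneg (by linarith) (by linarith)
    rw [Finset.prod_congr rfl habs]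
    have step1 : ∏ j ∈ Finset.Icc b d, ((gv x j : ℝ) - i) / gv x j
        ≤ ∏ j ∈ Finset.Icc b d, ((gv x j : ℝ) - 1) / gv x j := by
      apply Finset.prod_le_prod
      · intro j hj
        simp only [Finset.mem_Icc] at hj
        have hgj : (i : ℝ) + 1 ≤ (gv x j : ℝ) := by
          have : i + 1 ≤ gv x j := le_trans (le_trans hib hj.1) (le_gv x j)
          exact_mod_cast this
        apply div_nonneg (by linarith) (by linarith)
      · intro j hj
        simp only [Finset.mem_Icc] at hj
        have hgj : (i : ℝ) + 1 ≤ (gv x j : ℝ) := by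
          have : i + 1 ≤ gv x j := le_trans (le_trans hib hj.1) (le_gv x j)
          exact_mod_cast this
        have hi' : (1 : ℝ) ≤ (i : ℝ) := by exact_mod_cast hi
        gcongr
    refine le_trans step1 ?_
    -- relate to piW
    set F : ℕ → ℝ := fun j => if 1 < gv x j then ((gv x j : ℝ) - 1) / gv x j else 1 with hF
    have hFval : ∀ j ∈ Finset.Icc b d, F j = ((gv x j : ℝ) - 1) / gv x j := by
      intro j hj
      simp only [Finset.mem_Icc] at hj
      have : 1 < gv x j := by
        have := le_gv x j
        omega
      simp [hF, this]
    have hF12 : ∀ j, (1 / 2 : ℝ) ≤ F j := by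
      intro j
      simp only [hF]
      split
      · rename_i h
        have hg2 : (2 : ℝ) ≤ (gv x j : ℝ) := by exact_mod_cast h
        rw [div_le_div_iff₀ (by norm_num) (by linarith)]
        linarith
      · norm_num
    have hF0 : ∀ j, (0 : ℝ) ≤ F j := fun j => le_trans (by norm_num) (hF12 j)
    have hsub : Finset.Icc b d ⊆ Finset.Icc 1 d := by
      intro j hj; simp only [Finset.mem_Icc] at *; omega
    have hsplit : piW x = (∏ j ∈ Finset.Icc 1 d \ Finset.Icc b d, F j) *
        ∏ j ∈ Finset.Icc b d, F j := by
      unfold piW pik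
      simp only [Nat.cast_one]
      rw [Finset.prod_sdiff hsub]
    have hQ : (1 / 2 : ℝ) ^ (b - 1) ≤ ∏ j ∈ Finset.Icc 1 d \ Finset.Icc b d, F j := by
      have hcard : (Finset.Icc 1 d \ Finset.Icc b d).card ≤ b - 1 := by
        have hsub2 : Finset.Icc 1 d \ Finset.Icc b d ⊆ Finset.Icc 1 (b - 1) := by
          intro j hj
          simp only [Finset.mem_sdiff, Finset.mem_Icc, not_and, not_le] at hj
          simp only [Finset.mem_Icc]; omega
        calc (Finset.Icc 1 d \ Finset.Icc b d).card ≤ (Finset.Icc 1 (b - 1)).card :=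
              Finset.card_le_card hsub2
          _ = b - 1 := by rw [Nat.card_Icc]; omega
      calc (1 / 2 : ℝ) ^ (b - 1) ≤ (1 / 2 : ℝ) ^ (Finset.Icc 1 d \ Finset.Icc b d).card :=
            pow_le_pow_of_le_one (by norm_num) (by norm_num) hcard
        _ = ∏ _j ∈ Finset.Icc 1 d \ Finset.Icc b d, (1 / 2 : ℝ) :=
            (Finset.prod_const _).symm
        _ ≤ ∏ j ∈ Finset.Icc 1 d \ Finset.Icc b d, F j :=
            Finset.prod_le_prod (fun _ _ => by norm_num) (fun j _ => hF12 j)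
    have hP0 : (0 : ℝ) ≤ ∏ j ∈ Finset.Icc b d, F j :=
      Finset.prod_nonneg fun j _ => hF0 j
    have hkey : ∏ j ∈ Finset.Icc b d, F j ≤ 2 ^ (b - 1) * piW x := by
      rw [hsplit]
      have h1 : (1 : ℝ) ≤ 2 ^ (b - 1) * ∏ j ∈ Finset.Icc 1 d \ Finset.Icc b d, F j := by
        have h2 : (2 : ℝ) ^ (b - 1) * (1 / 2 : ℝ) ^ (b - 1) = 1 := by
          rw [one_div, inv_pow, mul_inv_cancel₀ (by positivity)]
        calc (1 : ℝ) = 2 ^ (b - 1) * (1 / 2 : ℝ) ^ (b - 1) := h2.symm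
          _ ≤ 2 ^ (b - 1) * ∏ j ∈ Finset.Icc 1 d \ Finset.Icc b d, F j := by
              apply mul_le_mul_of_nonneg_left hQ (by positivity)
      calc ∏ j ∈ Finset.Icc b d, F j
          = 1 * ∏ j ∈ Finset.Icc b d, F j := (one_mul _).symm
        _ ≤ (2 ^ (b - 1) * ∏ j ∈ Finset.Icc 1 d \ Finset.Icc b d, F j) *
              ∏ j ∈ Finset.Icc b d, F j := mul_le_mul_of_nonneg_right h1 hP0
        _ = 2 ^ (b - 1) * ((∏ j ∈ Finset.Icc 1 d \ Finset.Icc b d, F j) *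
              ∏ j ∈ Finset.Icc b d, F j) := by ring
    calc ∏ j ∈ Finset.Icc b d, ((gv x j : ℝ) - 1) / gv x j
        = ∏ j ∈ Finset.Icc b d, F j := (Finset.prod_congr rfl hFval).symm
      _ ≤ 2 ^ (b - 1) * piW x := hkey
  have h1nn : (0 : ℝ) ≤ ∏ j ∈ (Finset.Icc a d).filter (fun j => j < b),
      |((gv x j : ℝ) - i) / gv x j| := Finset.prod_nonneg fun j _ => abs_nonneg _
  have h2nn : (0 : ℝ) ≤ ∏ j ∈ Finset.Icc b d, |((gv x j : ℝ) - i) / gv x j| :=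
    Finset.prod_nonneg fun j _ => abs_nonneg _
  calc (∏ j ∈ (Finset.Icc a d).filter (fun j => j < b), |((gv x j : ℝ) - i) / gv x j|) *
        ∏ j ∈ Finset.Icc b d, |((gv x j : ℝ) - i) / gv x j|
      ≤ (i : ℝ) ^ b * (2 ^ (b - 1) * piW x) := by
        apply mul_le_mul part1 part2 h2nn (by positivity)
    _ = (i : ℝ) ^ b * 2 ^ (b - 1) * piW x := by ring

/-- If vertices `vs n` of `YF^r` converge letterwise to an infinite word `v` and
`π(vs n) → 0`, then for all fixed `a ≥ 1`, `i ≥ 1` the products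
`∏_{j=a}^{d(vs n)} (g(vs n, j) - i)/g(vs n, j)` tend to `0`. -/
theorem stmt13 (r : ℕ) (hr : 1 ≤ r) (v : ℕ → SymR r) (vs : ℕ → List (SymR r))
    (hconv : ∀ j : ℕ, ∀ᶠ n in atTop, (vs n).reverse[j]? = some (v j))
    (hpi : Tendsto (fun n => piW (forget (vs n))) atTop (nhds 0))
    (a i : ℕ) (ha : 1 ≤ a) (hi : 1 ≤ i) :
    Tendsto
      (fun n => ∏ j ∈ Finset.Icc a ((forget (vs n)).count true),
        ((gv (forget (vs n)) j : ℝ) - (i : ℝ)) / (gv (forget (vs n)) j : ℝ))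
      atTop (nhds 0) := by
  set C : ℝ := (i : ℝ) ^ (max a (i + 1)) * 2 ^ (max a (i + 1) - 1) with hC
  have hlim : Tendsto (fun n => C * piW (forget (vs n))) atTop (nhds 0) := by
    simpa using hpi.const_mul C
  apply squeeze_zero_norm _ hlim
  intro n
  rw [Real.norm_eq_abs]
  calc |∏ j ∈ Finset.Icc a ((forget (vs n)).count true),
        ((gv (forget (vs n)) j : ℝ) - (i : ℝ)) / (gv (forget (vs n)) j : ℝ)|
      ≤ (i : ℝ) ^ (max a (i + 1)) * 2 ^ (max a (i + 1) - 1) * piW (forget (vs n)) :=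
        key_bound _ a i ha hi
    _ = C * piW (forget (vs n)) := rfl
end
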